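/- arXiv:2601.15531 — 7 statements merged into one kernel-verified Lean document; each statement's English description precedes it below -/
import Mathlib

section
/- Let A be a maximally monotone operator on a real Hilbert space X. Then the map (x, γ) ↦ J_{γA}x from X × (0, ∞) to X is continuous (jointly, in the strong topology on X). -/
open Filter

def IsMonotoneOp {X : Type*} [NormedAddCommGroup X] [InnerProductSpace ℝ X]
    (A : X → Set X) : Prop :=
  ∀ ⦃x y u v : X⦄, y ∈ A x → v ∈ A u → (0 : ℝ) ≤ inner ℝ (x - u) (y - v)

def IsMaxMonotoneOp {X : Type*} [NormedAddCommGroup X] [InnerProductSpace ℝ X]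
    (A : X → Set X) : Prop :=
  IsMonotoneOp A ∧ ∀ B : X → Set X, IsMonotoneOp B → (∀ x, A x ⊆ B x) → ∀ x, A x = B x

/-- `J` is the resolvent `(Id + γ A)⁻¹` of `γ A`. -/
def IsResolventOf {X : Type*} [NormedAddCommGroup X] [InnerProductSpace ℝ X]
    (A : X → Set X) (γ : ℝ) (J : X → X) : Prop :=
  ∀ x : X, ∃ v ∈ A (J x), x = J x + γ • v

/-- The resolvent of a monotone operator is nonexpansive. -/
lemma resolvent_nonexpansive {X : Type*} [NormedAddCommGroup X] [InnerProductSpace ℝ X]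
    {A : X → Set X} (hA : IsMonotoneOp A) {γ : ℝ} (hγ : 0 < γ) {Jγ : X → X}
    (hJ : IsResolventOf A γ Jγ) (x y : X) : ‖Jγ x - Jγ y‖ ≤ ‖x - y‖ := by
  obtain ⟨v, hv, hx⟩ := hJ x
  obtain ⟨w, hw, hy⟩ := hJ y
  have hm : (0 : ℝ) ≤ inner ℝ (Jγ x - Jγ y) (v - w) := hA hv hw
  have hxy : x - y = (Jγ x - Jγ y) + γ • (v - w) := by
    linear_combination (norm := module) hx - hy
  have key : ‖Jγ x - Jγ y‖ ^ 2 ≤ inner ℝ (Jγ x - Jγ y) (x - y) := by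
    rw [hxy, inner_add_right, real_inner_smul_right, real_inner_self_eq_norm_sq]
    nlinarith
  have hle : (inner ℝ (Jγ x - Jγ y) (x - y) : ℝ) ≤ ‖Jγ x - Jγ y‖ * ‖x - y‖ :=
    real_inner_le_norm _ _
  rcases (norm_nonneg (Jγ x - Jγ y)).eq_or_lt with h0 | h0
  · rw [← h0]; exact norm_nonneg _
  · have h4 : ‖Jγ x - Jγ y‖ * ‖Jγ x - Jγ y‖ ≤ ‖x - y‖ * ‖Jγ x - Jγ y‖ := by nlinarith
    exact le_of_mul_le_mul_right h4 h0

/-- Comparison of resolvents with different parameters at the same point. -/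
lemma resolvent_compare {X : Type*} [NormedAddCommGroup X] [InnerProductSpace ℝ X]
    {A : X → Set X} (hA : IsMonotoneOp A) {γ μ : ℝ} (hμ : 0 < μ)
    {J1 J2 : X → X} {x v : X} (hv : v ∈ A (J1 x)) (hx : x = J1 x + γ • v)
    (hJ2 : IsResolventOf A μ J2) : ‖J1 x - J2 x‖ ≤ |γ - μ| * ‖v‖ := by
  obtain ⟨w, hw, hx2⟩ := hJ2 x
  have hm : (0 : ℝ) ≤ inner ℝ (J1 x - J2 x) (v - w) := hA hv hw
  have hdiff : J1 x - J2 x = μ • (w - v) + (μ - γ) • v := by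
    have : J1 x + γ • v = J2 x + μ • w := by rw [← hx, ← hx2]
    have h2 : J1 x = J2 x + μ • w - γ • v := by rw [← this]; abel
    rw [h2]; module
  have key : ‖J1 x - J2 x‖ ^ 2 ≤ (μ - γ) * inner ℝ (J1 x - J2 x) v := by
    have hsq : (‖J1 x - J2 x‖ : ℝ) ^ 2 = inner ℝ (J1 x - J2 x) (J1 x - J2 x) :=
      (real_inner_self_eq_norm_sq _).symm
    rw [hsq]
    nth_rewrite 2 [hdiff]
    rw [inner_add_right, real_inner_smul_right, real_inner_smul_right]
    have : (inner ℝ (J1 x - J2 x) (w - v) : ℝ) = - inner ℝ (J1 x - J2 x) (v - w) := by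
      rw [← inner_neg_right]; congr 1; abel
    nlinarith
  have hle : (inner ℝ (J1 x - J2 x) v : ℝ) ≤ ‖J1 x - J2 x‖ * ‖v‖ := real_inner_le_norm _ _
  have hle2 : (μ - γ) * inner ℝ (J1 x - J2 x) v ≤ |γ - μ| * (‖J1 x - J2 x‖ * ‖v‖) := by
    calc (μ - γ) * inner ℝ (J1 x - J2 x) v ≤ |(μ - γ) * inner ℝ (J1 x - J2 x) v| := le_abs_self _
    _ = |μ - γ| * |(inner ℝ (J1 x - J2 x) v : ℝ)| := abs_mul _ _
    _ ≤ |γ - μ| * (‖J1 x - J2 x‖ * ‖v‖) := by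
        rw [abs_sub_comm]
        exact mul_le_mul_of_nonneg_left (abs_real_inner_le_norm _ _) (abs_nonneg _)
  rcases (norm_nonneg (J1 x - J2 x)).eq_or_lt with h0 | h0
  · rw [← h0]; positivity
  · have h4 : ‖J1 x - J2 x‖ * ‖J1 x - J2 x‖ ≤ (|γ - μ| * ‖v‖) * ‖J1 x - J2 x‖ := by nlinarith
    exact le_of_mul_le_mul_right h4 h0

/-- For a maximally monotone `A`, the map `(x, γ) ↦ J_{γA} x` is jointly
(strongly) continuous on `X × (0, ∞)`. -/
theorem resolvent_jointly_continuous
    {X : Type*} [NormedAddCommGroup X] [InnerProductSpace ℝ X] [CompleteSpace X]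
    (A : X → Set X) (hA : IsMaxMonotoneOp A)
    (J : ℝ → X → X) (hJ : ∀ γ : ℝ, 0 < γ → IsResolventOf A γ (J γ)) :
    ContinuousOn (fun p : X × ℝ => J p.2 p.1) {p : X × ℝ | 0 < p.2} := by
  rintro ⟨x₀, γ₀⟩ hp
  have hγ₀ : 0 < γ₀ := hp
  obtain ⟨v₀, hv₀, hx₀⟩ := hJ γ₀ hγ₀ x₀
  rw [Metric.continuousWithinAt_iff]
  intro ε hε
  set C : ℝ := ‖v₀‖ with hC
  have hC0 : 0 ≤ C := norm_nonneg _
  refine ⟨ε / (2 * (1 + C)), by positivity, ?_⟩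
  rintro ⟨x, γ⟩ hq hdist
  have hγ : 0 < γ := hq
  have hd1 : dist x x₀ ≤ dist (⟨x, γ⟩ : X × ℝ) (⟨x₀, γ₀⟩ : X × ℝ) := le_max_left _ _
  have hd2 : dist γ γ₀ ≤ dist (⟨x, γ⟩ : X × ℝ) (⟨x₀, γ₀⟩ : X × ℝ) := le_max_right _ _
  have hb1 : ‖J γ x - J γ x₀‖ ≤ dist x x₀ := by
    rw [dist_eq_norm]
    exact resolvent_nonexpansive hA.1 hγ (hJ γ hγ) x x₀
  have hb2 : ‖J γ₀ x₀ - J γ x₀‖ ≤ |γ₀ - γ| * C :=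
    resolvent_compare hA.1 hγ hv₀ hx₀ (hJ γ hγ)
  have habs : |γ₀ - γ| = dist γ γ₀ := by rw [Real.dist_eq, abs_sub_comm]
  rw [dist_eq_norm]
  calc ‖J γ x - J γ₀ x₀‖ ≤ ‖J γ x - J γ x₀‖ + ‖J γ x₀ - J γ₀ x₀‖ := norm_sub_le_norm_sub_add_norm_sub _ _ _
    _ ≤ dist x x₀ + |γ₀ - γ| * C := by
        rw [← norm_neg (J γ x₀ - J γ₀ x₀)]
        have : -(J γ x₀ - J γ₀ x₀) = J γ₀ x₀ - J γ x₀ := by abel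
        rw [this]; exact add_le_add hb1 hb2
    _ < ε := by
        rw [habs]
        have hδ : dist (⟨x, γ⟩ : X × ℝ) (⟨x₀, γ₀⟩ : X × ℝ) < ε / (2 * (1 + C)) := hdist
        have h1 : dist x x₀ < ε / (2 * (1 + C)) := lt_of_le_of_lt hd1 hδ
        have h2 : dist γ γ₀ < ε / (2 * (1 + C)) := lt_of_le_of_lt hd2 hδ
        have hdnn : 0 ≤ dist γ γ₀ := dist_nonneg
        have : dist γ γ₀ * C ≤ dist γ γ₀ * (1 + C) := by nlinarith
        have h3 : ε / (2 * (1 + C)) * (1 + C) = ε / 2 := by field_simp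
        nlinarith
end

section
/- Let X be a real Hilbert space, E a finite-dimensional Euclidean space, P ⊆ E a nonempty closed set with 0 ∉ P, and (T_p)_{p∈P} a family of operators on X. Suppose there is a continuous function η: P → (0,∞) such that each T_p is conically η(p)-averaged, and for each z ∈ X the map p ↦ T_p z is strongly continuous. If (z_k) is a sequence in X converging weakly to z, (p_k) is a sequence in P converging to p̄ ∈ P, and z_k − T_{p_k} z_k → 0 strongly, then z is a fixed point of T_{p̄}. -/
open Filter

def ConicallyAveraged {X : Type*} [NormedAddCommGroup X] [InnerProductSpace ℝ X]
    (T : X → X) (η : ℝ) : Prop :=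
  ∀ x y : X, ‖T x - T y‖ ^ 2 + ((1 - η) / η) * ‖(x - T x) - (y - T y)‖ ^ 2 ≤ ‖x - y‖ ^ 2

/-- Parametric demiclosedness principle for conically averaged operators:
if `z_k ⇀ z` weakly, `p_k → p̄` in a closed parameter set `P ⊆ E` (with `0 ∉ P`),
each `T_p` is conically `η(p)`-averaged with `η` continuous and positive on `P`,
`p ↦ T_p z` is strongly continuous, and `z_k − T_{p_k} z_k → 0` strongly,
then `z` is a fixed point of `T_{p̄}`. -/
theorem parametric_demiclosedness_conical
    {X E : Type*} [NormedAddCommGroup X] [InnerProductSpace ℝ X] [CompleteSpace X]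
    [NormedAddCommGroup E] [InnerProductSpace ℝ E] [FiniteDimensional ℝ E]
    (P : Set E) (hPne : P.Nonempty) (hPcl : IsClosed P) (hP0 : (0 : E) ∉ P)
    (T : E → X → X) (η : E → ℝ)
    (hηcont : ContinuousOn η P) (hηpos : ∀ p ∈ P, 0 < η p)
    (hconical : ∀ p ∈ P, ConicallyAveraged (T p) (η p))
    (hTcont : ∀ z : X, ContinuousOn (fun p => T p z) P)
    (z : ℕ → X) (zbar : X)
    (hzweak : ∀ y : X, Tendsto (fun k => (inner ℝ (z k) y : ℝ)) atTop (nhds (inner ℝ zbar y)))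
    (p : ℕ → E) (pbar : E) (hpP : ∀ k, p k ∈ P) (hpbarP : pbar ∈ P)
    (hp : Tendsto p atTop (nhds pbar))
    (hres : Tendsto (fun k => z k - T (p k) (z k)) atTop (nhds 0)) :
    T pbar zbar = zbar := by
  have hpP' : Tendsto p atTop (nhdsWithin pbar P) :=
    tendsto_nhdsWithin_of_tendsto_nhds_of_eventually_within p hp (Eventually.of_forall hpP)
  have hηlim : Tendsto (fun k => η (p k)) atTop (nhds (η pbar)) :=
    (hηcont pbar hpbarP).tendsto.comp hpP'
  have hblim : Tendsto (fun k => T (p k) zbar) atTop (nhds (T pbar zbar)) :=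
    ((hTcont zbar) pbar hpbarP).tendsto.comp hpP'
  set u : X := zbar - T pbar zbar with hu
  set s : ℕ → X := fun k => (zbar - T (p k) zbar) - (z k - T (p k) (z k)) with hs
  have hslim : Tendsto s atTop (nhds u) := by
    have h := (((tendsto_const_nhds (x := zbar)).sub hblim).sub hres)
    simpa using h
  -- boundedness of z k - zbar via Banach–Steinhaus
  obtain ⟨M, hM⟩ : ∃ M : ℝ, ∀ k, ‖z k - zbar‖ ≤ M := by
    have h := banach_steinhaus (g := fun k : ℕ => innerSL ℝ (z k - zbar)) ?_
    · obtain ⟨C, hC⟩ := h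
      refine ⟨C, fun k => ?_⟩
      have h2 := hC k
      rwa [innerSL_apply_norm] at h2
    · intro y
      have ht : Tendsto (fun k => (inner ℝ (z k - zbar) y : ℝ)) atTop (nhds 0) := by
        have h2 := (hzweak y).sub (tendsto_const_nhds (x := (inner ℝ zbar y : ℝ)))
        simpa [inner_sub_left] using h2
      have hb : BddAbove (Set.range fun k => ‖(inner ℝ (z k - zbar) y : ℝ)‖) :=
        (ht.norm).bddAbove_range
      obtain ⟨C, hC⟩ := hb
      exact ⟨C, fun k => hC ⟨k, rfl⟩⟩
  have hM0 : (0 : ℝ) ≤ M := le_trans (norm_nonneg _) (hM 0)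
  -- key inequality
  have key : ∀ k, (1 / η (p k)) * ‖s k‖ ^ 2 ≤
      -2 * (inner ℝ (z k - zbar) (s k) : ℝ) := by
    intro k
    have h1 := hconical (p k) (hpP k) (z k) zbar
    have hA : T (p k) (z k) - T (p k) zbar = (z k - zbar) + s k := by
      simp only [hs]; abel
    have hB : (z k - T (p k) (z k)) - (zbar - T (p k) zbar) = -(s k) := by
      simp only [hs]; abel
    rw [hA, hB, norm_neg] at h1
    rw [norm_add_sq_real] at h1
    have hη := hηpos (p k) (hpP k)
    have heq : (1 : ℝ) / η (p k) = 1 + (1 - η (p k)) / η (p k) := by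
      field_simp
      ring
    rw [heq, add_mul, one_mul]
    linarith
  -- limits
  have hLHS : Tendsto (fun k => (1 / η (p k)) * ‖s k‖ ^ 2) atTop
      (nhds ((1 / η pbar) * ‖u‖ ^ 2)) :=
    (tendsto_const_nhds.div hηlim (ne_of_gt (hηpos pbar hpbarP))).mul
      ((hslim.norm).pow 2)
  have hinner1 : Tendsto (fun k => (inner ℝ (z k - zbar) u : ℝ)) atTop (nhds 0) := by
    have h2 := (hzweak u).sub (tendsto_const_nhds (x := (inner ℝ zbar u : ℝ)))
    simpa [inner_sub_left] using h2
  have hinner2 : Tendsto (fun k => (inner ℝ (z k - zbar) (s k - u) : ℝ)) atTop (nhds 0) := by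
    refine squeeze_zero_norm (f := fun k => (inner ℝ (z k - zbar) (s k - u) : ℝ))
        (a := fun k => M * ‖s k - u‖) (fun k => ?_) ?_
    · calc ‖(inner ℝ (z k - zbar) (s k - u) : ℝ)‖
          ≤ ‖z k - zbar‖ * ‖s k - u‖ := by
            simpa using abs_real_inner_le_norm (z k - zbar) (s k - u)
        _ ≤ M * ‖s k - u‖ := by
            exact mul_le_mul_of_nonneg_right (hM k) (norm_nonneg _)
    · have h3 := (tendsto_const_nhds (x := M)).mul
        ((hslim.sub (tendsto_const_nhds (x := u))).norm)
      simpa using h3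
  have hinner : Tendsto (fun k => (inner ℝ (z k - zbar) (s k) : ℝ)) atTop (nhds 0) := by
    have h := hinner1.add hinner2
    have heq : ∀ k, (inner ℝ (z k - zbar) u : ℝ) + inner ℝ (z k - zbar) (s k - u)
        = inner ℝ (z k - zbar) (s k) := by
      intro k
      rw [← inner_add_right]
      congr 1
      abel
    simpa [heq] using h
  have hRHS : Tendsto (fun k => -2 * (inner ℝ (z k - zbar) (s k) : ℝ)) atTop (nhds 0) := by
    have h := hinner.const_mul (-2 : ℝ)
    simpa using h
  have hfin : (1 / η pbar) * ‖u‖ ^ 2 ≤ 0 :=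
    le_of_tendsto_of_tendsto' hLHS hRHS key
  have hηb := hηpos pbar hpbarP
  have hu2 : ‖u‖ ^ 2 ≤ 0 := by
    have hpos : (0 : ℝ) < 1 / η pbar := by positivity
    nlinarith [sq_nonneg ‖u‖]
  have : u = 0 := by
    have := le_antisymm hu2 (by positivity)
    have hn : ‖u‖ = 0 := by nlinarith [norm_nonneg u]
    exact norm_eq_zero.mp hn
  have := sub_eq_zero.mp this
  exact this.symm
end

section
/- (Robbins–Siegmund, deterministic version) Let (α_k), (β_k), (ε_k) be sequences of positive reals with ∑_k ε_k < ∞ and α_{k+1} ≤ (1+ε_k)·α_k − β_k for all k ∈ ℕ. Then (α_k) converges and ∑_k β_k < ∞. -/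
open Filter

/-- (Robbins–Siegmund, deterministic version.) If `(α_k), (β_k), (ε_k)` are
positive real sequences with `∑ ε_k < ∞` and `α_{k+1} ≤ (1+ε_k)·α_k − β_k` for all `k`, then
`(α_k)` converges and `∑ β_k < ∞`. -/
theorem robbins_siegmund
    (α β ε : ℕ → ℝ)
    (hα : ∀ k, 0 < α k) (hβ : ∀ k, 0 < β k) (hε : ∀ k, 0 < ε k)
    (hεsum : Summable ε)
    (hrec : ∀ k, α (k + 1) ≤ (1 + ε k) * α k - β k) :
    (∃ l : ℝ, Tendsto α atTop (nhds l)) ∧ Summable β := by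
  set P : ℕ → ℝ := fun k => ∏ i ∈ Finset.range k, (1 + ε i) with hP
  have hPpos : ∀ k, 0 < P k := fun k =>
    Finset.prod_pos fun i _ => by linarith [hε i]
  have hPsucc : ∀ k, P (k + 1) = P k * (1 + ε k) := fun k => Finset.prod_range_succ _ _
  have hPmono : Monotone P := monotone_nat_of_le_succ fun k => by
    rw [hPsucc k]
    nlinarith [hPpos k, hε k]
  have hPbdd : ∀ k, P k ≤ Real.exp (∑' i, ε i) := by
    intro k
    calc P k ≤ ∏ i ∈ Finset.range k, Real.exp (ε i) := by
          apply Finset.prod_le_prod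
          · intro i _; linarith [hε i]
          · intro i _; linarith [Real.add_one_le_exp (ε i)]
      _ = Real.exp (∑ i ∈ Finset.range k, ε i) := by rw [Real.exp_sum]
      _ ≤ Real.exp (∑' i, ε i) := by
          apply Real.exp_le_exp.2
          exact Summable.sum_le_tsum _ (fun i _ => (hε i).le) hεsum
  have hPconv : ∃ L : ℝ, Tendsto P atTop (nhds L) := by
    obtain ⟨L, hL⟩ := tendsto_of_monotone hPmono |>.resolve_left (fun h => by
      obtain ⟨k, hk⟩ := (h.eventually (eventually_gt_atTop (Real.exp (∑' i, ε i)))).exists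
      exact absurd (hPbdd k) (not_le.2 hk))
    exact ⟨L, hL⟩
  obtain ⟨L, hL⟩ := hPconv
  set a : ℕ → ℝ := fun k => α k / P k with ha
  have hstep : ∀ k, a (k + 1) ≤ a k - β k / P (k + 1) := by
    intro k
    have h1 : (0:ℝ) < P (k + 1) := hPpos (k + 1)
    have h0 : (0:ℝ) < P k := hPpos k
    have hε1 : (0:ℝ) < 1 + ε k := by linarith [hε k]
    have key : a k - β k / P (k + 1) = ((1 + ε k) * α k - β k) / P (k + 1) := by
      simp only [ha, hPsucc k]
      field_simp
    show α (k + 1) / P (k + 1) ≤ _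
    rw [key]
    exact div_le_div_of_nonneg_right (hrec k) h1.le
  have hanti : Antitone a := antitone_nat_of_succ_le fun k => by
    have := hstep k
    have hb : 0 < β k / P (k + 1) := div_pos (hβ k) (hPpos (k + 1))
    linarith
  have hapos : ∀ k, 0 < a k := fun k => div_pos (hα k) (hPpos k)
  have haconv : ∃ l : ℝ, Tendsto a atTop (nhds l) := by
    rcases tendsto_of_antitone hanti with h | h
    · exfalso
      obtain ⟨k, hk⟩ := (h.eventually (eventually_lt_atBot (0:ℝ))).exists
      exact absurd (hapos k) (not_lt.2 hk.le)
    · exact h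
  obtain ⟨l, hl⟩ := haconv
  constructor
  · refine ⟨l * L, ?_⟩
    have : α = fun k => a k * P k := by
      funext k
      rw [ha]
      field_simp [(hPpos k).ne']
    rw [this]
    exact hl.mul hL
  · -- summability of β
    have hc : Summable (fun k => β k / P (k + 1)) := by
      apply summable_of_sum_range_le (c := a 0)
      · intro k; exact (div_pos (hβ k) (hPpos (k + 1))).le
      · intro n
        have : ∀ n, ∑ k ∈ Finset.range n, β k / P (k + 1) ≤ a 0 - a n := by
          intro n
          induction n with
          | zero => simp
          | succ m ih =>
            rw [Finset.sum_range_succ]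
            have := hstep m
            linarith
        linarith [this n, hapos n]
    refine Summable.of_nonneg_of_le (fun k => (hβ k).le) (fun k => ?_) (hc.mul_left (Real.exp (∑' i, ε i)))
    · 
      have h2 := hPpos (k + 1)
      calc β k = P (k + 1) * (β k / P (k + 1)) := by field_simp
        _ ≤ Real.exp (∑' i, ε i) * (β k / P (k + 1)) :=
            mul_le_mul_of_nonneg_right (hPbdd (k + 1))
              (div_pos (hβ k) h2).le
end

section
/- Let X be a real Hilbert space, Θ, Γ ⊆ (0,∞) nonempty closed sets not containing 0, and (T_{θ,γ}) conically η(θ,γ)-averaged operators on X with common nonempty fixed point sets Fix T_{θ,γ} = Fix T_{θ̄,γ} for some θ̄. Let (Q_{δ←γ}) be fixed-point relocators for (T_{θ̄,γ}) with Lipschitz constants L_{δ←γ} ≥ 1. Assume (γ_k) ⊆ Γ converges to γ̄ ∈ Γ with ∑_k (L_{γ_{k+1}←γ_k} − 1) < ∞, and (λ_k) ⊆ (0,∞) satisfies liminf_k λ_k(1 − η_kλ_k)/η_k > 0 where η_k := η(θ_k,γ_k). Then the sequence defined by z_{k+1} := Q_{γ_{k+1}←γ_k}((1−λ_k)z_k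 + λ_k T_{θ_k,γ_k} z_k) is bounded and z_k − T_{θ_k,γ_k} z_k → 0 strongly. -/
open Filter

lemma quasi_contract {X : Type*} [NormedAddCommGroup X] [InnerProductSpace ℝ X]
    {T : X → X} {η lam : ℝ} (hη : 0 < η) (hlam : 0 < lam)
    (h : ConicallyAveraged T η) (z p : X) (hp : T p = p) :
    ‖(1 - lam) • z + lam • T z - p‖ ^ 2 ≤
      ‖z - p‖ ^ 2 - (lam * (1 - η * lam) / η) * ‖z - T z‖ ^ 2 := by
  have h1 := h z p
  rw [hp, sub_self, sub_zero] at h1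
  set u := z - p with hu
  set r := z - T z with hr
  have hTz : T z - p = u - r := by rw [hu, hr]; abel
  have hw : (1 - lam) • z + lam • T z - p = u - lam • r := by
    rw [hu, hr]; rw [smul_sub]; module
  rw [hTz] at h1
  rw [hw]
  have e1 : ‖u - lam • r‖ ^ 2 = ‖u‖ ^ 2 - 2 * (lam * inner ℝ u r) + lam ^ 2 * ‖r‖ ^ 2 := by
    rw [norm_sub_sq_real, real_inner_smul_right, norm_smul]
    rw [Real.norm_eq_abs]
    rw [abs_of_pos hlam]; ring
  have e2 : ‖u - r‖ ^ 2 = ‖u‖ ^ 2 - 2 * inner ℝ u r + ‖r‖ ^ 2 := norm_sub_sq_real u r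
  rw [e2] at h1
  rw [e1]
  have key : (1 / η) * ‖r‖ ^ 2 ≤ 2 * inner ℝ u r := by
    have hdiv : (1 - η) / η * ‖r‖ ^ 2 = (1/η) * ‖r‖^2 - ‖r‖^2 := by
      field_simp
    nlinarith [h1, hdiv]
  have hgoal : lam * (1 - η * lam) / η * ‖r‖ ^ 2 = lam * ((1/η) * ‖r‖^2) - lam^2 * ‖r‖^2 := by
    field_simp
  nlinarith [mul_le_mul_of_nonneg_left key (le_of_lt hlam)]

lemma seq_analysis (A S c l2 : ℕ → ℝ) (hA : ∀ k, 0 ≤ A k) (hS : ∀ k, 0 ≤ S k)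
    (hl2 : ∀ k, 1 ≤ l2 k)
    (hrec : ∀ k, A (k + 1) ≤ l2 k * (A k - c k * S k))
    (hsum : Summable (fun k => l2 k - 1))
    (c' : ℝ) (hc' : 0 < c') (K : ℕ) (hK : ∀ k ≥ K, c' ≤ c k) :
    (∃ M, ∀ k, A k ≤ M) ∧ Tendsto S atTop (nhds 0) := by
  set g : ℕ → ℝ := fun k => l2 k - 1 with hg
  have hg0 : ∀ k, 0 ≤ g k := fun k => by simp [hg]; linarith [hl2 k]
  have hgt : ∀ (s : Finset ℕ), ∑ i ∈ s, g i ≤ ∑' k, g k :=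
    fun s => Summable.sum_le_tsum s (fun i _ => hg0 i) hsum
  have hstep : ∀ k ≥ K, A (k + 1) ≤ l2 k * A k := by
    intro k hk
    have h1 := hrec k
    have h2 : 0 ≤ c k * S k := mul_nonneg (le_of_lt (lt_of_lt_of_le hc' (hK k hk))) (hS k)
    nlinarith [hl2 k]
  have hexp : ∀ m, A (K + m) ≤ Real.exp (∑ i ∈ Finset.range m, g (K + i)) * A K := by
    intro m
    induction m with
    | zero => simp
    | succ m ih =>
      have h1 : A (K + m + 1) ≤ l2 (K + m) * A (K + m) :=
        hstep (K + m) (Nat.le_add_right K m)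
      have h2 : l2 (K + m) ≤ Real.exp (g (K + m)) := by
        have := Real.add_one_le_exp (g (K + m))
        simp [hg] at this ⊢; linarith
      have h3 : A (K + (m + 1)) = A (K + m + 1) := by ring_nf
      rw [h3, Finset.sum_range_succ, Real.exp_add]
      calc A (K + m + 1) ≤ l2 (K + m) * A (K + m) := h1
        _ ≤ Real.exp (g (K + m)) * (Real.exp (∑ i ∈ Finset.range m, g (K + i)) * A K) := by
            apply mul_le_mul h2 ih (hA _)
            exact le_of_lt (Real.exp_pos _)
        _ = Real.exp (∑ i ∈ Finset.range m, g (K + i)) * Real.exp (g (K + m)) * A K := by ring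
  set E := Real.exp (∑' k, g k) with hE
  have hE1 : 1 ≤ E := by
    rw [hE]
    have : (0:ℝ) ≤ ∑' k, g k := tsum_nonneg hg0
    calc (1:ℝ) = Real.exp 0 := by simp
      _ ≤ Real.exp _ := Real.exp_le_exp.mpr this
  have hbound : ∀ n ≥ K, A n ≤ E * A K := by
    intro n hn
    obtain ⟨m, rfl⟩ := Nat.exists_eq_add_of_le hn
    refine (hexp m).trans ?_
    apply mul_le_mul_of_nonneg_right _ (hA K)
    exact Real.exp_le_exp.mpr (by
      have : ∑ i ∈ Finset.range m, g (K + i) = ∑ j ∈ Finset.Ico K (K + m), g j := by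
        rw [Finset.sum_Ico_eq_sum_range]; simp
      rw [this]; exact hgt _)
  set M : ℝ := (∑ i ∈ Finset.range (K + 1), A i) + E * A K with hM
  have hMbound : ∀ n, A n ≤ M := by
    intro n
    rcases le_or_gt K n with h | h
    · have := hbound n h
      have hs : 0 ≤ ∑ i ∈ Finset.range (K + 1), A i := Finset.sum_nonneg (fun i _ => hA i)
      rw [hM]; linarith
    · have h1 : A n ≤ ∑ i ∈ Finset.range (K + 1), A i :=
        Finset.single_le_sum (fun i _ => hA i) (Finset.mem_range.mpr (by omega))
      have h2 : 0 ≤ E * A K := mul_nonneg (by linarith) (hA K)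
      rw [hM]; linarith
  refine ⟨⟨M, hMbound⟩, ?_⟩
  have hM0 : 0 ≤ M := le_trans (hA 0) (hMbound 0)
  have hper : ∀ k ≥ K, c' * S k ≤ g k * M + (A k - A (k + 1)) := by
    intro k hk
    have h1 := hrec k
    have hck := hK k hk
    have hl := hl2 k
    have hSk := hS k
    have hAk := hMbound k
    have hAk0 := hA k
    have : l2 k * (c k * S k) ≥ c' * S k := by
      nlinarith [mul_nonneg (sub_nonneg.mpr hck) hSk,
        mul_nonneg (sub_nonneg.mpr hl) (mul_nonneg (le_trans hc'.le hck) hSk)]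
    have : l2 k * A k ≤ A k + g k * M := by
      simp only [hg]; nlinarith
    simp only [hg] at *
    nlinarith
  have hParts : ∀ n, ∑ i ∈ Finset.range n, S (K + i) ≤ ((∑' k, g k) * M + A K) / c' := by
    intro n
    rw [le_div_iff₀ hc']
    have h1 : ∀ i ∈ Finset.range n, c' * S (K + i) ≤ g (K + i) * M + (A (K + i) - A (K + i + 1)) := by
      intro i _
      exact hper (K + i) (Nat.le_add_right K i)
    calc (∑ i ∈ Finset.range n, S (K + i)) * c' = ∑ i ∈ Finset.range n, c' * S (K + i) := by
          rw [Finset.sum_mul]; congr 1; ext i; ring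
      _ ≤ ∑ i ∈ Finset.range n, (g (K + i) * M + (A (K + i) - A (K + i + 1))) :=
          Finset.sum_le_sum h1
      _ = (∑ i ∈ Finset.range n, g (K + i)) * M + ∑ i ∈ Finset.range n, (A (K + i) - A (K + i + 1)) := by
          rw [Finset.sum_add_distrib, Finset.sum_mul]
      _ ≤ (∑' k, g k) * M + (A K - A (K + n)) := by
          have e1 : ∑ i ∈ Finset.range n, (A (K + i) - A (K + i + 1)) = A K - A (K + n) := by
            have := Finset.sum_range_sub' (fun i => A (K + i)) n
            simpa [Nat.add_assoc] using this
          rw [e1]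
          gcongr
          · have : ∑ i ∈ Finset.range n, g (K + i) = ∑ j ∈ Finset.Ico K (K + n), g j := by
              rw [Finset.sum_Ico_eq_sum_range]; simp
            rw [this]; exact hgt _
      _ ≤ (∑' k, g k) * M + A K := by linarith [hA (K + n)]
  have hSsum : Summable (fun i => S (K + i)) :=
    summable_of_sum_range_le (fun i => hS (K + i)) hParts
  have hStend : Tendsto (fun i => S (K + i)) atTop (nhds 0) := hSsum.tendsto_atTop_zero
  have h2 : Tendsto (fun i => S (i + K)) atTop (nhds 0) := by
    simpa [Nat.add_comm] using hStend
  exact (tendsto_add_atTop_iff_nat K).mp h2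

/-- Convergence of relocated fixed-point iterations of conically averaged
operators: the iterates `z_{k+1} = Q_{γ_{k+1}←γ_k}((1−λ_k)z_k + λ_k T_{θ_k,γ_k} z_k)` form a
bounded sequence, and the residuals `z_k − T_{θ_k,γ_k} z_k` converge strongly to `0`. -/
theorem relocated_iteration_bounded_and_residual
    {X : Type*} [NormedAddCommGroup X] [InnerProductSpace ℝ X] [CompleteSpace X]
    (Θ Γ : Set ℝ) (hΘne : Θ.Nonempty) (hΓne : Γ.Nonempty)
    (hΘcl : IsClosed Θ) (hΓcl : IsClosed Γ)
    (hΘpos : Θ ⊆ Set.Ioi (0 : ℝ)) (hΓpos : Γ ⊆ Set.Ioi (0 : ℝ))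
    (T : ℝ → ℝ → X → X) (η : ℝ → ℝ → ℝ)
    (hηpos : ∀ θ ∈ Θ, ∀ γ ∈ Γ, 0 < η θ γ)
    (hconical : ∀ θ ∈ Θ, ∀ γ ∈ Γ, ConicallyAveraged (T θ γ) (η θ γ))
    (θbar : ℝ) (hθbar : θbar ∈ Θ)
    (hFixEq : ∀ θ ∈ Θ, ∀ γ ∈ Γ, {x : X | T θ γ x = x} = {x : X | T θbar γ x = x})
    (hFixne : ∀ γ ∈ Γ, {x : X | T θbar γ x = x}.Nonempty)
    (Q : ℝ → ℝ → X → X) (L : ℝ → ℝ → ℝ)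
    -- fixed-point relocator properties for (T_{θ̄,γ})_{γ∈Γ}
    (hbij : ∀ γ ∈ Γ, ∀ δ ∈ Γ,
      Set.BijOn (Q δ γ) {x : X | T θbar γ x = x} {x : X | T θbar δ x = x})
    (hcont : ∀ γ ∈ Γ, ∀ x : X, T θbar γ x = x → ContinuousOn (fun δ => Q δ γ x) Γ)
    (hsemi : ∀ γ ∈ Γ, ∀ δ ∈ Γ, ∀ ε ∈ Γ, ∀ x : X, T θbar γ x = x →
      Q ε δ (Q δ γ x) = Q ε γ x)
    (hLone : ∀ γ ∈ Γ, ∀ δ ∈ Γ, 1 ≤ L δ γ)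
    (hLip : ∀ γ ∈ Γ, ∀ δ ∈ Γ, LipschitzWith (Real.toNNReal (L δ γ)) (Q δ γ))
    -- parameter sequences
    (θ : ℕ → ℝ) (hθ : ∀ k, θ k ∈ Θ)
    (γ : ℕ → ℝ) (hγ : ∀ k, γ k ∈ Γ)
    (γbar : ℝ) (hγbar : γbar ∈ Γ) (hγlim : Tendsto γ atTop (nhds γbar))
    (hLsum : Summable (fun k => L (γ (k + 1)) (γ k) - 1))
    (lam : ℕ → ℝ) (hlam : ∀ k, 0 < lam k)
    (hliminf : 0 < atTop.liminf (fun k =>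
      lam k * (1 - η (θ k) (γ k) * lam k) / η (θ k) (γ k)))
    -- the relocated fixed-point iteration
    (z : ℕ → X)
    (hzrec : ∀ k, z (k + 1) =
      Q (γ (k + 1)) (γ k) ((1 - lam k) • z k + lam k • T (θ k) (γ k) (z k))) :
    Bornology.IsBounded (Set.range z) ∧
    Tendsto (fun k => z k - T (θ k) (γ k) (z k)) atTop (nhds 0) := by
  -- abbreviations
  set c : ℕ → ℝ := fun k => lam k * (1 - η (θ k) (γ k) * lam k) / η (θ k) (γ k) with hc
  -- extract eventual lower bound on c
  obtain ⟨c', hc'pos, K, hK⟩ : ∃ c' > 0, ∃ K : ℕ, ∀ k ≥ K, c' ≤ c k := by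
    have hlim := hliminf
    rw [Filter.liminf_eq] at hlim
    set s := {a : ℝ | ∀ᶠ n in atTop, a ≤ c n} with hs
    have hne : s.Nonempty := by
      by_contra h
      rw [Set.not_nonempty_iff_eq_empty] at h
      rw [h, Real.sSup_empty] at hlim
      exact lt_irrefl 0 hlim
    obtain ⟨a, ha, hlt⟩ := exists_lt_of_lt_csSup hne (half_lt_self hlim)
    refine ⟨sSup s / 2, half_pos hlim, ?_⟩
    rw [hs] at ha
    obtain ⟨K, hK⟩ := eventually_atTop.mp ha
    exact ⟨K, fun k hk => le_trans (le_of_lt hlt) (hK k hk)⟩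
  -- fixed point sequence
  obtain ⟨x0, hx0⟩ := hFixne (γ 0) (hγ 0)
  simp only [Set.mem_setOf_eq] at hx0
  set x : ℕ → X := fun n => Nat.rec x0 (fun k xk => Q (γ (k+1)) (γ k) xk) n with hxdef
  have hxsucc : ∀ k, x (k + 1) = Q (γ (k+1)) (γ k) (x k) := fun k => rfl
  have hx0' : x 0 = x0 := rfl
  have hxfix : ∀ k, T θbar (γ k) (x k) = x k := by
    intro k
    induction k with
    | zero => exact hx0
    | succ k ih =>
      have := (hbij (γ k) (hγ k) (γ (k+1)) (hγ (k+1))).mapsTo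
        (show x k ∈ {x : X | T θbar (γ k) x = x} from ih)
      exact this
  have hxfixθ : ∀ k, T (θ k) (γ k) (x k) = x k := by
    intro k
    have h1 : x k ∈ {y : X | T (θ k) (γ k) y = y} := by
      rw [hFixEq (θ k) (hθ k) (γ k) (hγ k)]
      exact hxfix k
    exact h1
  -- Q γ' γ' is the identity on fixed points
  have hQid : ∀ γ' ∈ Γ, ∀ y : X, T θbar γ' y = y → Q γ' γ' y = y := by
    intro γ' hγ' y hy
    have hb := hbij γ' hγ' γ' hγ'
    have h1 : Q γ' γ' (Q γ' γ' y) = Q γ' γ' y := hsemi γ' hγ' γ' hγ' γ' hγ' y hy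
    have hmemQ : Q γ' γ' y ∈ {x : X | T θbar γ' x = x} := hb.mapsTo hy
    exact hb.injOn hmemQ hy h1
  have hxQ : ∀ k, x k = Q (γ k) (γ 0) x0 := by
    intro k
    induction k with
    | zero => exact (hQid (γ 0) (hγ 0) x0 hx0).symm
    | succ k ih =>
      rw [hxsucc k, ih]
      exact hsemi (γ 0) (hγ 0) (γ k) (hγ k) (γ (k+1)) (hγ (k+1)) x0 hx0
  -- x is bounded
  have hxtend : Tendsto x atTop (nhds (Q γbar (γ 0) x0)) := by
    have hcw : Tendsto (fun δ => Q δ (γ 0) x0) (nhdsWithin γbar Γ)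
        (nhds (Q γbar (γ 0) x0)) := hcont (γ 0) (hγ 0) x0 hx0 γbar hγbar
    have hγw : Tendsto γ atTop (nhdsWithin γbar Γ) :=
      tendsto_nhdsWithin_of_tendsto_nhds_of_eventually_within γ hγlim
        (Eventually.of_forall hγ)
    have := hcw.comp hγw
    convert this using 1
    funext k
    exact hxQ k
  obtain ⟨Cx, hCx⟩ : ∃ Cx, ∀ k, ‖x k‖ ≤ Cx := by
    obtain ⟨Cx, hCx⟩ := (hxtend.norm).bddAbove_range
    exact ⟨Cx, fun k => hCx (Set.mem_range_self k)⟩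
  -- the key recursive inequality
  set A : ℕ → ℝ := fun k => ‖z k - x k‖ ^ 2 with hA
  set S : ℕ → ℝ := fun k => ‖z k - T (θ k) (γ k) (z k)‖ ^ 2 with hS
  set l2 : ℕ → ℝ := fun k => (L (γ (k+1)) (γ k)) ^ 2 with hl2
  have hArec : ∀ k, A (k + 1) ≤ l2 k * (A k - c k * S k) := by
    intro k
    have hq := quasi_contract (hηpos (θ k) (hθ k) (γ k) (hγ k)) (hlam k)
      (hconical (θ k) (hθ k) (γ k) (hγ k)) (z k) (x k) (hxfixθ k)
    have hL1 := hLone (γ k) (hγ k) (γ (k+1)) (hγ (k+1))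
    have hlip := (hLip (γ k) (hγ k) (γ (k+1)) (hγ (k+1))).dist_le_mul
      ((1 - lam k) • z k + lam k • T (θ k) (γ k) (z k)) (x k)
    rw [Real.coe_toNNReal _ (by linarith : (0:ℝ) ≤ L (γ (k+1)) (γ k))] at hlip
    rw [dist_eq_norm, dist_eq_norm] at hlip
    have hz1 : z (k+1) - x (k+1) =
        Q (γ (k+1)) (γ k) ((1 - lam k) • z k + lam k • T (θ k) (γ k) (z k))
          - Q (γ (k+1)) (γ k) (x k) := by
      rw [hzrec k, hxsucc k]
    have h2 : ‖z (k+1) - x (k+1)‖ ≤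
        L (γ (k+1)) (γ k) * ‖(1 - lam k) • z k + lam k • T (θ k) (γ k) (z k) - x k‖ := by
      rw [hz1]; exact hlip
    have h3 : A (k+1) ≤ l2 k *
        ‖(1 - lam k) • z k + lam k • T (θ k) (γ k) (z k) - x k‖ ^ 2 := by
      have := pow_le_pow_left₀ (norm_nonneg _) h2 2
      rw [mul_pow] at this
      exact this
    refine h3.trans ?_
    apply mul_le_mul_of_nonneg_left hq (sq_nonneg _)
  have hl2one : ∀ k, 1 ≤ l2 k := by
    intro k
    have := hLone (γ k) (hγ k) (γ (k+1)) (hγ (k+1))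
    simp only [hl2]; nlinarith
  -- summability of l2 - 1
  have hl2sum : Summable (fun k => l2 k - 1) := by
    obtain ⟨C, hC⟩ := hLsum.tendsto_atTop_zero.bddAbove_range
    have hC' : ∀ k, L (γ (k+1)) (γ k) - 1 ≤ C := fun k => hC (Set.mem_range_self k)
    apply Summable.of_nonneg_of_le (fun k => by
      have := hLone (γ k) (hγ k) (γ (k+1)) (hγ (k+1)); simp only [hl2]; nlinarith)
      (fun k => ?_) (hLsum.mul_left (C + 2))
    have h1 := hLone (γ k) (hγ k) (γ (k+1)) (hγ (k+1))
    have h2 := hC' k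
    simp only [hl2]
    nlinarith
  obtain ⟨⟨M, hMb⟩, hStend⟩ := seq_analysis A S c l2
    (fun k => sq_nonneg _) (fun k => sq_nonneg _) hl2one hArec hl2sum c' hc'pos K hK
  constructor
  · rw [isBounded_iff_forall_norm_le]
    refine ⟨Real.sqrt M + Cx, ?_⟩
    rintro _ ⟨k, rfl⟩
    have h1 : ‖z k‖ ≤ ‖z k - x k‖ + ‖x k‖ := by
      have := norm_add_le (z k - x k) (x k)
      simpa using this
    have h2 : ‖z k - x k‖ ≤ Real.sqrt M := by
      have := Real.sqrt_le_sqrt (hMb k)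
      rwa [Real.sqrt_sq (norm_nonneg _)] at this
    linarith [hCx k]
  · rw [tendsto_zero_iff_norm_tendsto_zero]
    have h2 : Tendsto (fun k => Real.sqrt (S k)) atTop (nhds 0) := by
      have := (Real.continuous_sqrt.tendsto 0).comp hStend
      rw [Real.sqrt_zero] at this; exact this
    convert h2 using 2 with k
    rw [hS]
    exact (Real.sqrt_sq (norm_nonneg _)).symm
end

section
/- Under the hypotheses of the relocated fixed-point iteration theorem (conically averaged operators with relocators and summable Lipschitz excess), if additionally for every z ∈ X the map (θ,γ) ↦ T_{θ,γ}z is strongly continuous, (θ_k) is bounded and separated from zero, and liminf_k η_k > 0, then the iterates z_{k+1} = Q_{γ_{k+1}←γ_k}((1−λ_k)z_k + λ_k T_{θ_k,γ_k} z_k) and the images T_{θ_k,γ_k}z_k both converge weakly to the same point of Fix T_{θ̄,γ̄}. -/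
open Filter

/-- Weak convergence of a sequence in a real Hilbert space. -/
def WeakConvSeq {X : Type*} [NormedAddCommGroup X] [InnerProductSpace ℝ X]
    (z : ℕ → X) (w : X) : Prop :=
  ∀ y : X, Tendsto (fun k => (inner ℝ (z k) y : ℝ)) atTop (nhds (inner ℝ w y))

section Aux

lemma pos_liminf_exists (u : ℕ → ℝ) (h : 0 < atTop.liminf u) :
    ∃ b > 0, ∀ᶠ k in atTop, b ≤ u k := by
  by_contra hcon
  push_neg at hcon
  have : atTop.liminf u ≤ 0 := by
    rw [liminf_eq]
    refine Real.sSup_le (fun x hx => ?_) le_rfl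
    by_contra hx0
    push_neg at hx0
    exact hcon x hx0 (Filter.Eventually.mono (show ∀ᶠ n in atTop, x ≤ u n from hx) fun n hn => not_lt.mpr hn)
  linarith

lemma norm_combo {X : Type*} [NormedAddCommGroup X] [InnerProductSpace ℝ X]
    (a b : X) (t : ℝ) :
    ‖(1 - t) • a + t • b‖ ^ 2
      = (1 - t) * ‖a‖ ^ 2 + t * ‖b‖ ^ 2 - t * (1 - t) * ‖a - b‖ ^ 2 := by
  have h := real_inner_self_eq_norm_sq ((1 - t) • a + t • b)
  have ha := real_inner_self_eq_norm_sq a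
  have hb := real_inner_self_eq_norm_sq b
  have hab := real_inner_self_eq_norm_sq (a - b)
  simp only [inner_add_add_self, inner_sub_sub_self, real_inner_smul_left,
    real_inner_smul_right] at h ha hb hab
  linear_combination (-1 : ℝ) * h + (1 - t) * ha + t * hb + (-(t * (1 - t))) * hab

lemma km_ineq {X : Type*} [NormedAddCommGroup X] [InnerProductSpace ℝ X]
    (T : X → X) (η : ℝ) (hη : 0 < η)
    (hT : ∀ x y : X, ‖T x - T y‖ ^ 2 + ((1 - η) / η) * ‖(x - T x) - (y - T y)‖ ^ 2 ≤ ‖x - y‖ ^ 2)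
    (q x : X) (hq : T q = q) (t : ℝ) (ht : 0 ≤ t) :
    ‖(1 - t) • x + t • T x - q‖ ^ 2
      ≤ ‖x - q‖ ^ 2 - (t * (1 - η * t) / η) * ‖x - T x‖ ^ 2 := by
  have hkey := hT x q
  rw [hq] at hkey
  simp only [sub_self, sub_zero] at hkey
  have hid : (1 - t) • x + t • T x - q = (1 - t) • (x - q) + t • (T x - q) := by
    module
  rw [hid, norm_combo]
  have h2 : (x - q) - (T x - q) = x - T x := by abel
  rw [h2]
  have hη' : η ≠ 0 := ne_of_gt hη
  have hthis : (1 - η) / η * ‖x - T x‖ ^ 2 ≤ ‖x - q‖ ^ 2 - ‖T x - q‖ ^ 2 := by linarith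
  have h3 : t * ((1 - η) / η * ‖x - T x‖ ^ 2) ≤ t * (‖x - q‖ ^ 2 - ‖T x - q‖ ^ 2) :=
    mul_le_mul_of_nonneg_left hthis ht
  have e1 : (1 - η) / η + (1 - t) = (1 - η * t) / η := by
    rw [eq_div_iff hη', add_mul, div_mul_cancel₀ _ hη']; ring
  have hc : t * (1 - η * t) / η = t * ((1 - η) / η + (1 - t)) := by
    rw [e1, mul_div_assoc]
  rw [hc]
  nlinarith [h3]

lemma quasi_fejer (s d ε : ℕ → ℝ) (hs : ∀ k, 0 ≤ s k) (hd : ∀ k, 0 ≤ d k)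
    (hε : ∀ k, 0 ≤ ε k) (hsum : Summable ε)
    (hrec : ∀ k, s (k + 1) ≤ (1 + ε k) * (s k - d k)) :
    (∃ A, Tendsto s atTop (nhds A)) ∧ Tendsto d atTop (nhds 0) := by
  set P : ℕ → ℝ := fun k => ∏ j ∈ Finset.range k, (1 + ε j) with hP
  have hP1 : ∀ k, 1 ≤ P k := by
    intro k
    have := Finset.prod_le_prod (s := Finset.range k) (f := fun _ => (1:ℝ))
      (g := fun j => 1 + ε j) (fun j _ => zero_le_one)
      (fun j _ => by show (1:ℝ) ≤ 1 + ε j; linarith [hε j])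
    simpa using this
  have hPpos : ∀ k, 0 < P k := fun k => lt_of_lt_of_le one_pos (hP1 k)
  have hPsucc : ∀ k, P (k + 1) = P k * (1 + ε k) := fun k => Finset.prod_range_succ _ _
  have hPmono : Monotone P := monotone_nat_of_le_succ (fun k => by
    rw [hPsucc]
    exact le_mul_of_one_le_right (le_of_lt (hPpos k)) (by linarith [hε k]))
  have hPbound : ∀ k, P k ≤ Real.exp (∑' j, ε j) := by
    intro k
    have h1 : P k ≤ ∏ j ∈ Finset.range k, Real.exp (ε j) :=
      Finset.prod_le_prod (fun j _ => by linarith [hε j])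
        (fun j _ => by linarith [Real.add_one_le_exp (ε j)])
    rw [← Real.exp_sum] at h1
    exact h1.trans (Real.exp_le_exp.mpr
      (Summable.sum_le_tsum (Finset.range k) (fun j _ => hε j) hsum))
  have hPbdd : BddAbove (Set.range P) := ⟨Real.exp (∑' j, ε j), by
    rintro x ⟨k, rfl⟩; exact hPbound k⟩
  have hPlim : Tendsto P atTop (nhds (⨆ k, P k)) := tendsto_atTop_ciSup hPmono hPbdd
  set Pinf := ⨆ k, P k with hPinf
  have hPle : ∀ k, P k ≤ Pinf := fun k => le_ciSup hPbdd k
  have hPinfpos : 0 < Pinf := lt_of_lt_of_le (hPpos 0) (hPle 0)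
  set v : ℕ → ℝ := fun k => s k / P k with hv
  set e : ℕ → ℝ := fun k => d k / Pinf with he
  have hvkey : ∀ k, v (k + 1) ≤ v k - e k := by
    intro k
    have h1 : (0:ℝ) < 1 + ε k := by linarith [hε k]
    have h2 : v (k + 1) ≤ ((1 + ε k) * (s k - d k)) / ((1 + ε k) * P k) := by
      show s (k+1) / P (k+1) ≤ _
      rw [show P (k+1) = (1 + ε k) * P k from by rw [hPsucc]; ring]
      exact div_le_div_of_nonneg_right (hrec k) (le_of_lt (mul_pos h1 (hPpos k)))
    rw [mul_div_mul_left _ _ (ne_of_gt h1)] at h2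
    have h3 : d k / Pinf ≤ d k / P k :=
      div_le_div_of_nonneg_left (hd k) (hPpos k) (hPle k)
    calc v (k+1) ≤ (s k - d k) / P k := h2
    _ = v k - d k / P k := by rw [sub_div]
    _ ≤ v k - e k := by show _ ≤ v k - d k / Pinf; linarith
  have hvnn : ∀ k, 0 ≤ v k := fun k => div_nonneg (hs k) (le_of_lt (hPpos k))
  have hvanti : Antitone v := antitone_nat_of_succ_le (fun k => by
    have := hvkey k
    have h2 : e k ≥ 0 := div_nonneg (hd k) (le_of_lt hPinfpos)
    linarith [hvkey k])
  have hvbdd : BddBelow (Set.range v) := ⟨0, by rintro x ⟨k, rfl⟩; exact hvnn k⟩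
  have hvlim : Tendsto v atTop (nhds (⨅ k, v k)) := tendsto_atTop_ciInf hvanti hvbdd
  constructor
  · refine ⟨(⨅ k, v k) * Pinf, ?_⟩
    have := hvlim.mul hPlim
    refine this.congr (fun k => ?_)
    show v k * P k = s k
    exact div_mul_cancel₀ (s k) (ne_of_gt (hPpos k))
  · have htel : ∀ n, ∑ j ∈ Finset.range n, d j / Pinf ≤ v 0 - v n := by
      intro n
      induction n with
      | zero => simp
      | succ n ih =>
        rw [Finset.sum_range_succ]
        have := hvkey n
        linarith
    have hsummable : Summable e := by
      apply summable_of_sum_range_le (c := v 0) (fun k => div_nonneg (hd k) (le_of_lt hPinfpos))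
      intro n
      linarith [htel n, hvnn n]
    have h0 : Tendsto e atTop (nhds 0) := hsummable.tendsto_atTop_zero
    have := h0.const_mul Pinf
    rw [mul_zero] at this
    refine this.congr (fun k => ?_)
    show Pinf * (d k / Pinf) = d k
    rw [mul_comm, div_mul_cancel₀ _ (ne_of_gt hPinfpos)]

lemma diag_subseq (g : ℕ → ℕ → ℝ) (hb : ∀ i, ∃ C, ∀ k, |g i k| ≤ C) :
    ∃ φ : ℕ → ℕ, StrictMono φ ∧ ∀ i, ∃ l,
      Tendsto (fun k => g i (φ k)) atTop (nhds l) := by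
  classical
  have step : ∀ (i : ℕ) (ψ : ℕ → ℕ), ∃ e : ℕ → ℕ, StrictMono e ∧ ∃ l,
      Tendsto (fun k => g i (ψ (e k))) atTop (nhds l) := by
    intro i ψ
    obtain ⟨C, hC⟩ := hb i
    have hmem : ∀ k, g i (ψ k) ∈ Set.Icc (-C) C := by
      intro k
      have := abs_le.mp (hC (ψ k))
      exact ⟨this.1, this.2⟩
    obtain ⟨l, -, e, he, hel⟩ :=
      tendsto_subseq_of_bounded (Metric.isBounded_Icc (-C) C) hmem
    exact ⟨e, he, l, hel⟩
  choose e he hl using step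
  set Ψ : ℕ → ℕ → ℕ := fun i => Nat.rec id (fun i r => r ∘ e i r) i with hΨ
  have hΨsucc : ∀ i, Ψ (i + 1) = Ψ i ∘ e i (Ψ i) := fun i => rfl
  have hΨmono : ∀ i, StrictMono (Ψ i) := by
    intro i
    induction i with
    | zero => exact strictMono_id
    | succ i ih => exact ih.comp (he i (Ψ i))
  set φ : ℕ → ℕ := fun k => Ψ k k with hφdef
  have hφ : StrictMono φ := by
    apply strictMono_nat_of_lt_succ
    intro k
    have h1 : Ψ k k < Ψ k (k + 1) := (hΨmono k) (Nat.lt_succ_self k)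
    have h2 : Ψ k (k + 1) ≤ Ψ k (e k (Ψ k) (k + 1)) :=
      (hΨmono k).monotone (he k (Ψ k)).le_apply
    exact lt_of_lt_of_le h1 h2
  have hsub : ∀ i k, i ≤ k → ∀ n, ∃ m, n ≤ m ∧ Ψ k n = Ψ i m := by
    intro i k hik
    induction k with
    | zero =>
      intro n
      exact ⟨n, le_rfl, by rw [Nat.le_zero.mp hik]⟩
    | succ k ihk =>
      intro n
      rcases Nat.lt_or_ge i (k+1) with hlt | hge
      · have hik' : i ≤ k := Nat.lt_succ_iff.mp hlt
        obtain ⟨m, hm1, hm2⟩ := ihk hik' (e k (Ψ k) n)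
        exact ⟨m, le_trans (he k (Ψ k)).le_apply hm1, by rw [hΨsucc]; exact hm2⟩
      · have : i = k + 1 := le_antisymm hik hge
        exact ⟨n, le_rfl, by rw [this]⟩
  refine ⟨φ, hφ, fun i => ?_⟩
  obtain ⟨li, hli⟩ := hl i (Ψ i)
  refine ⟨li, ?_⟩
  · have hlim : Tendsto (fun k => g i (Ψ (i+1) k)) atTop (nhds li) := hli
    set M : ℕ → ℕ := fun k =>
      if h : i + 1 ≤ k then Classical.choose (hsub (i+1) k h k) else 0 with hM
    have hMk : ∀ k, i + 1 ≤ k → k ≤ M k ∧ φ k = Ψ (i+1) (M k) := by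
      intro k hk
      have hspec := Classical.choose_spec (hsub (i+1) k hk k)
      rw [hM]
      simp only [dif_pos hk]
      exact ⟨hspec.1, hspec.2⟩
    have hMtendsto : Tendsto M atTop atTop := by
      apply tendsto_atTop_mono' atTop (f₁ := id)
      · filter_upwards [eventually_ge_atTop (i+1)] with k hk
        exact (hMk k hk).1
      · exact tendsto_id
    have h2 : Tendsto (fun k => g i (Ψ (i+1) (M k))) atTop
        (nhds li) := hlim.comp hMtendsto
    apply h2.congr'
    filter_upwards [eventually_ge_atTop (i+1)] with k hk
    rw [(hMk k hk).2]

lemma weak_compact_seq {X : Type*} [NormedAddCommGroup X] [InnerProductSpace ℝ X]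
    [CompleteSpace X] (z : ℕ → X) (C : ℝ) (hC : ∀ k, ‖z k‖ ≤ C) :
    ∃ φ : ℕ → ℕ, StrictMono φ ∧ ∃ w : X,
      ∀ y : X, Tendsto (fun k => (inner ℝ (z (φ k)) y : ℝ)) atTop (nhds (inner ℝ w y)) := by
  classical
  have hC0 : 0 ≤ C := le_trans (norm_nonneg (z 0)) (hC 0)
  obtain ⟨φ, hφ, hconv⟩ := diag_subseq (fun i k => (inner ℝ (z k) (z i) : ℝ)) (by
    intro i
    refine ⟨C * ‖z i‖, fun k => ?_⟩
    calc |(inner ℝ (z k) (z i) : ℝ)| ≤ ‖z k‖ * ‖z i‖ := abs_real_inner_le_norm _ _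
    _ ≤ C * ‖z i‖ := mul_le_mul_of_nonneg_right (hC k) (norm_nonneg _))
  -- submodule of convergence points
  set S : Submodule ℝ X :=
    { carrier := {y : X | ∃ l, Tendsto (fun k => (inner ℝ (z (φ k)) y : ℝ)) atTop (nhds l)}
      add_mem' := by
        rintro y₁ y₂ ⟨l₁, h₁⟩ ⟨l₂, h₂⟩
        exact ⟨l₁ + l₂, by simpa [inner_add_right] using h₁.add h₂⟩
      zero_mem' := ⟨0, by simpa [inner_zero_right] using
        (tendsto_const_nhds : Tendsto (fun _ : ℕ => (0:ℝ)) atTop (nhds 0))⟩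
      smul_mem' := by
        rintro a y ⟨l, h⟩
        exact ⟨a * l, by simpa [inner_smul_right] using h.const_mul a⟩ } with hS
  have hspan : Submodule.span ℝ (Set.range z) ≤ S := by
    rw [Submodule.span_le]
    rintro x ⟨i, rfl⟩
    exact hconv i
  set K : Submodule ℝ X := Submodule.span ℝ (Set.range z) with hK
  set Y : Submodule ℝ X := K.topologicalClosure with hY
  have hYconv : ∀ y ∈ Y, ∃ l, Tendsto (fun k => (inner ℝ (z (φ k)) y : ℝ)) atTop (nhds l) := by
    intro y hy
    have hycl : y ∈ closure (K : Set X) := by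
      rw [← Submodule.topologicalClosure_coe]; exact hy
    have hcauchy : CauchySeq (fun k => (inner ℝ (z (φ k)) y : ℝ)) := by
      rw [Metric.cauchySeq_iff]
      intro ε hε
      have hδ : (0:ℝ) < ε / (4 * (C + 1)) := by positivity
      obtain ⟨y', hy'K, hydist⟩ := Metric.mem_closure_iff.mp hycl _ hδ
      obtain ⟨l, hl⟩ := hspan hy'K
      have hlc : CauchySeq (fun k => (inner ℝ (z (φ k)) y' : ℝ)) := hl.cauchySeq
      rw [Metric.cauchySeq_iff] at hlc
      obtain ⟨N, hN⟩ := hlc (ε/2) (by linarith)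
      refine ⟨N, fun m hm n hn => ?_⟩
      have key : ∀ a b : ℕ, |(inner ℝ (z (φ a) - z (φ b)) (y - y') : ℝ)| ≤ ε / 2 := by
        intro a b
        calc |(inner ℝ (z (φ a) - z (φ b)) (y - y') : ℝ)|
            ≤ ‖z (φ a) - z (φ b)‖ * ‖y - y'‖ := abs_real_inner_le_norm _ _
        _ ≤ (2 * C + 2) * (ε / (4 * (C + 1))) := by
            apply mul_le_mul
            · calc ‖z (φ a) - z (φ b)‖ ≤ ‖z (φ a)‖ + ‖z (φ b)‖ := norm_sub_le _ _
              _ ≤ 2 * C + 2 := by linarith [hC (φ a), hC (φ b)]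
            · rw [dist_eq_norm] at hydist; exact le_of_lt hydist
            · exact norm_nonneg _
            · positivity
        _ = ε / 2 := by field_simp; ring
      have hdist := hN m hm n hn
      rw [Real.dist_eq] at hdist ⊢
      have hdecomp : (inner ℝ (z (φ m)) y : ℝ) - inner ℝ (z (φ n)) y
          = ((inner ℝ (z (φ m)) y' : ℝ) - inner ℝ (z (φ n)) y')
            + (inner ℝ (z (φ m) - z (φ n)) (y - y') : ℝ) := by
        simp [inner_sub_left, inner_sub_right]
        try ring
      rw [hdecomp]
      calc |_ + _| ≤ |(inner ℝ (z (φ m)) y' : ℝ) - inner ℝ (z (φ n)) y'|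
            + |(inner ℝ (z (φ m) - z (φ n)) (y - y') : ℝ)| := abs_add_le _ _
      _ < ε/2 + ε/2 := by
          have := key m n
          -- strict from first term
          have h2 := key m n
          linarith [hdist, key m n]
      _ = ε := by ring
    exact cauchySeq_tendsto_of_complete hcauchy
  -- all of X
  haveI : CompleteSpace Y := (Submodule.isClosed_topologicalClosure K).completeSpace_coe
  have hallconv : ∀ y : X, ∃ l, Tendsto (fun k => (inner ℝ (z (φ k)) y : ℝ)) atTop (nhds l) := by
    intro y
    obtain ⟨l, hl⟩ := hYconv ((Y.orthogonalProjectionOnto y : X)) (Y.orthogonalProjectionOnto y).2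
    refine ⟨l, hl.congr (fun k => ?_)⟩
    have hzY : z (φ k) ∈ Y := Submodule.le_topologicalClosure K
      (Submodule.subset_span ⟨φ k, rfl⟩)
    have horth : y - (Y.orthogonalProjectionOnto y : X) ∈ Yᗮ :=
      Y.sub_starProjection_mem_orthogonal y
    have h0 : (inner ℝ (z (φ k)) (y - (Y.orthogonalProjectionOnto y : X)) : ℝ) = 0 :=
      (Submodule.mem_orthogonal Y _).mp horth _ hzY
    have := inner_sub_right (𝕜 := ℝ) (z (φ k)) y ((Y.orthogonalProjectionOnto y : X))
    rw [inner_sub_right] at h0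
    linarith [h0]
  choose l hl using hallconv
  have hladd : ∀ y₁ y₂, l (y₁ + y₂) = l y₁ + l y₂ := by
    intro y₁ y₂
    refine tendsto_nhds_unique (hl (y₁ + y₂)) ?_
    simpa [inner_add_right] using (hl y₁).add (hl y₂)
  have hlsmul : ∀ (a : ℝ) y, l (a • y) = a * l y := by
    intro a y
    refine tendsto_nhds_unique (hl (a • y)) ?_
    simpa [inner_smul_right] using (hl y).const_mul a
  have hlbound : ∀ y, ‖l y‖ ≤ C * ‖y‖ := by
    intro y
    rw [Real.norm_eq_abs]
    refine le_of_tendsto (hl y).abs (Eventually.of_forall (fun k => ?_))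
    calc |(inner ℝ (z (φ k)) y : ℝ)| ≤ ‖z (φ k)‖ * ‖y‖ := abs_real_inner_le_norm _ _
    _ ≤ C * ‖y‖ := mul_le_mul_of_nonneg_right (hC _) (norm_nonneg _)
  set F : X →L[ℝ] ℝ := LinearMap.mkContinuous
    { toFun := l, map_add' := hladd, map_smul' := hlsmul } C hlbound with hF
  set w : X := (InnerProductSpace.toDual ℝ X).symm F with hw
  have hwap : ∀ y, (inner ℝ w y : ℝ) = l y := by
    intro y
    have : ((InnerProductSpace.toDual ℝ X) w) y = inner ℝ w y :=
      InnerProductSpace.toDual_apply_apply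
    rw [← this, hw]
    simp only [LinearIsometryEquiv.apply_symm_apply]
    rfl
  exact ⟨φ, hφ, w, fun y => by rw [hwap y]; exact hl y⟩

lemma eta_bound {c e0 H lamk : ℝ} (hc : 0 < c) (he : 0 < e0) (hH : 0 < H)
    (hl : 0 < lamk) (h1 : c ≤ lamk * (1 - H * lamk) / H) (h2 : e0 ≤ H) :
    H ≤ 1 / (c * e0) := by
  have h3 : c * H ≤ lamk * (1 - H * lamk) := by
    rw [le_div_iff₀ hH] at h1; linarith
  have h4 : 0 < 1 - H * lamk := by nlinarith [mul_pos hc hH]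
  have h5 : lamk * e0 ≤ 1 := by
    nlinarith [mul_le_mul_of_nonneg_left h2 hl.le]
  have h6 : c * H ≤ lamk := by
    nlinarith [mul_nonneg hl.le (mul_nonneg hH.le hl.le)]
  rw [le_div_iff₀ (by positivity)]
  nlinarith [mul_le_mul_of_nonneg_right h6 he.le]

lemma conical_key {X : Type*} [NormedAddCommGroup X] [InnerProductSpace ℝ X]
    (zz w Tz Tw : X) (H : ℝ) (hH : 0 < H)
    (hcon : ‖Tz - Tw‖ ^ 2 + ((1 - H) / H) * ‖(zz - Tz) - (w - Tw)‖ ^ 2 ≤ ‖zz - w‖ ^ 2) :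
    ‖(zz - Tz) - (w - Tw)‖ ^ 2 ≤ H * (2 * inner ℝ (zz - w) ((zz - Tz) - (w - Tw))) := by
  set u : X := (zz - Tz) - (w - Tw) with hu
  have hTzw : Tz - Tw = (zz - w) - u := by rw [hu]; abel
  rw [hTzw] at hcon
  have hexp := norm_sub_sq_real (zz - w) u
  have h9 : (1 + (1 - H) / H) * ‖u‖ ^ 2 ≤ 2 * inner ℝ (zz - w) u := by nlinarith [hcon, hexp]
  have hfrac : 1 + (1 - H) / H = 1 / H := by field_simp; ring
  rw [hfrac] at h9
  have h8 := mul_le_mul_of_nonneg_left h9 hH.le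
  rw [← mul_assoc, mul_one_div, div_self hH.ne', one_mul] at h8
  exact h8

end Aux

set_option maxHeartbeats 1600000 in
/-- Weak convergence of relocated fixed-point iterations: under the
hypotheses of the relocated iteration theorem, if moreover `(θ,γ) ↦ T_{θ,γ}z` is strongly
continuous for each `z`, `(θ_k)` is bounded and separated from zero, and `liminf η_k > 0`,
then `(z_k)` and `(T_{θ_k,γ_k} z_k)` converge weakly to the same point of `Fix T_{θ̄,γ̄}`. -/
theorem relocated_iteration_weak_convergence
    {X : Type*} [NormedAddCommGroup X] [InnerProductSpace ℝ X] [CompleteSpace X]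
    (Θ Γ : Set ℝ) (hΘne : Θ.Nonempty) (hΓne : Γ.Nonempty)
    (hΘcl : IsClosed Θ) (hΓcl : IsClosed Γ)
    (hΘpos : Θ ⊆ Set.Ioi (0 : ℝ)) (hΓpos : Γ ⊆ Set.Ioi (0 : ℝ))
    (T : ℝ → ℝ → X → X) (η : ℝ → ℝ → ℝ)
    (hηpos : ∀ θ ∈ Θ, ∀ γ ∈ Γ, 0 < η θ γ)
    (hconical : ∀ θ ∈ Θ, ∀ γ ∈ Γ, ConicallyAveraged (T θ γ) (η θ γ))
    (θbar : ℝ) (hθbar : θbar ∈ Θ)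
    (hFixEq : ∀ θ ∈ Θ, ∀ γ ∈ Γ, {x : X | T θ γ x = x} = {x : X | T θbar γ x = x})
    (hFixne : ∀ γ ∈ Γ, {x : X | T θbar γ x = x}.Nonempty)
    (Q : ℝ → ℝ → X → X) (L : ℝ → ℝ → ℝ)
    (hbij : ∀ γ ∈ Γ, ∀ δ ∈ Γ,
      Set.BijOn (Q δ γ) {x : X | T θbar γ x = x} {x : X | T θbar δ x = x})
    (hcont : ∀ γ ∈ Γ, ∀ x : X, T θbar γ x = x → ContinuousOn (fun δ => Q δ γ x) Γ)
    (hsemi : ∀ γ ∈ Γ, ∀ δ ∈ Γ, ∀ ε ∈ Γ, ∀ x : X, T θbar γ x = x →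
      Q ε δ (Q δ γ x) = Q ε γ x)
    (hLone : ∀ γ ∈ Γ, ∀ δ ∈ Γ, 1 ≤ L δ γ)
    (hLip : ∀ γ ∈ Γ, ∀ δ ∈ Γ, LipschitzWith (Real.toNNReal (L δ γ)) (Q δ γ))
    (θ : ℕ → ℝ) (hθ : ∀ k, θ k ∈ Θ)
    (γ : ℕ → ℝ) (hγ : ∀ k, γ k ∈ Γ)
    (γbar : ℝ) (hγbar : γbar ∈ Γ) (hγlim : Tendsto γ atTop (nhds γbar))
    (hLsum : Summable (fun k => L (γ (k + 1)) (γ k) - 1))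
    (lam : ℕ → ℝ) (hlam : ∀ k, 0 < lam k)
    (hliminf : 0 < atTop.liminf (fun k =>
      lam k * (1 - η (θ k) (γ k) * lam k) / η (θ k) (γ k)))
    (z : ℕ → X)
    (hzrec : ∀ k, z (k + 1) =
      Q (γ (k + 1)) (γ k) ((1 - lam k) • z k + lam k • T (θ k) (γ k) (z k)))
    -- additional hypotheses
    (hTcont : ∀ x : X, ContinuousOn (fun p : ℝ × ℝ => T p.1 p.2 x) (Θ ×ˢ Γ))
    (hθbdd : ∃ a b : ℝ, 0 < a ∧ ∀ k, a ≤ θ k ∧ θ k ≤ b)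
    (hηliminf : 0 < atTop.liminf (fun k => η (θ k) (γ k))) :
    ∃ w : X, T θbar γbar w = w ∧ WeakConvSeq z w ∧
      WeakConvSeq (fun k => T (θ k) (γ k) (z k)) w := by
  classical
  obtain ⟨c, hcpos, hcev⟩ := pos_liminf_exists _ hliminf
  obtain ⟨e0, he0pos, he0ev⟩ := pos_liminf_exists _ hηliminf
  -- summability of L^2 - 1
  have hLk1 : ∀ k, 1 ≤ L (γ (k+1)) (γ k) := fun k => hLone _ (hγ k) _ (hγ (k+1))
  have hεsum : Summable (fun k => L (γ (k+1)) (γ k) ^ 2 - 1) := by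
    obtain ⟨M, hM⟩ := hLsum.tendsto_atTop_zero.bddAbove_range
    have hM' : ∀ k, L (γ (k+1)) (γ k) - 1 ≤ M := fun k => hM ⟨k, rfl⟩
    refine Summable.of_nonneg_of_le (fun k => by nlinarith [hLk1 k])
      (fun k => ?_) (hLsum.mul_right (M + 2))
    nlinarith [hLk1 k, hM' k]
  have hεnn : ∀ k, 0 ≤ L (γ (k+1)) (γ k) ^ 2 - 1 := fun k => by nlinarith [hLk1 k]
  obtain ⟨K, hK⟩ := eventually_atTop.mp hcev
  -- the main Fejér blocks, for any fixed point q of T θbar γbar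
  have main : ∀ q : X, T θbar γbar q = q →
      (∃ A, Tendsto (fun k => ‖z k - q‖) atTop (nhds A)) ∧
      Tendsto (fun k => ‖z k - T (θ k) (γ k) (z k)‖) atTop (nhds 0) := by
    intro q hq
    have hqmem : q ∈ {x : X | T θbar γbar x = x} := hq
    set qs : ℕ → X := fun k => Q (γ k) γbar q with hqs
    have hqsfixbar : ∀ k, qs k ∈ {x : X | T θbar (γ k) x = x} := fun k =>
      (hbij γbar hγbar (γ k) (hγ k)).mapsTo hqmem
    have hqsfix : ∀ k, T (θ k) (γ k) (qs k) = qs k := by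
      intro k
      have h2 := hqsfixbar k
      have h3 := hFixEq (θ k) (hθ k) (γ k) (hγ k)
      have : qs k ∈ {x : X | T (θ k) (γ k) x = x} := by rw [h3]; exact h2
      exact this
    have hqsrec : ∀ k, qs (k+1) = Q (γ (k+1)) (γ k) (qs k) :=
      fun k => (hsemi γbar hγbar (γ k) (hγ k) (γ (k+1)) (hγ (k+1)) q hq).symm
    set s : ℕ → ℝ := fun k => ‖z k - qs k‖ ^ 2 with hsdef
    set d2 : ℕ → ℝ := fun k => ‖z k - T (θ k) (γ k) (z k)‖ ^ 2 with hd2def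
    have hKM : ∀ k, ‖((1 - lam k) • z k + lam k • T (θ k) (γ k) (z k)) - qs k‖ ^ 2
        ≤ s k - (lam k * (1 - η (θ k) (γ k) * lam k) / η (θ k) (γ k)) * d2 k := fun k =>
      km_ineq _ _ (hηpos _ (hθ k) _ (hγ k)) (hconical _ (hθ k) _ (hγ k)) _ _
        (hqsfix k) _ (le_of_lt (hlam k))
    have hstep : ∀ k, ‖z (k+1) - qs (k+1)‖
        ≤ L (γ (k+1)) (γ k) * ‖((1 - lam k) • z k + lam k • T (θ k) (γ k) (z k)) - qs k‖ := by
      intro k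
      rw [hzrec k, hqsrec k]
      have hlip := (hLip (γ k) (hγ k) (γ (k+1)) (hγ (k+1))).dist_le_mul
        ((1 - lam k) • z k + lam k • T (θ k) (γ k) (z k)) (qs k)
      rw [dist_eq_norm, dist_eq_norm] at hlip
      rwa [Real.coe_toNNReal _ (le_trans zero_le_one (hLk1 k))] at hlip
    have hsrec : ∀ k, K ≤ k → s (k+1) ≤ (1 + (L (γ (k+1)) (γ k) ^ 2 - 1)) * (s k - c * d2 k) := by
      intro k hk
      have h1 : s (k+1) ≤ L (γ (k+1)) (γ k) ^ 2
          * ‖((1 - lam k) • z k + lam k • T (θ k) (γ k) (z k)) - qs k‖ ^ 2 := by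
        have := pow_le_pow_left₀ (norm_nonneg _) (hstep k) 2
        rw [mul_pow] at this
        exact this
      have h2 : ‖((1 - lam k) • z k + lam k • T (θ k) (γ k) (z k)) - qs k‖ ^ 2
          ≤ s k - c * d2 k := by
        have h3 := hKM k
        have h4 : c * d2 k ≤ (lam k * (1 - η (θ k) (γ k) * lam k) / η (θ k) (γ k)) * d2 k :=
          mul_le_mul_of_nonneg_right (hK k hk) (sq_nonneg _)
        linarith
      calc s (k+1) ≤ L (γ (k+1)) (γ k) ^ 2
          * ‖((1 - lam k) • z k + lam k • T (θ k) (γ k) (z k)) - qs k‖ ^ 2 := h1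
      _ ≤ L (γ (k+1)) (γ k) ^ 2 * (s k - c * d2 k) :=
          mul_le_mul_of_nonneg_left h2 (by nlinarith [hLk1 k])
      _ = (1 + (L (γ (k+1)) (γ k) ^ 2 - 1)) * (s k - c * d2 k) := by ring
    have hqf := quasi_fejer (fun k => s (k + K)) (fun k => c * d2 (k + K))
      (fun k => L (γ (k + K + 1)) (γ (k + K)) ^ 2 - 1)
      (fun k => sq_nonneg _) (fun k => mul_nonneg (le_of_lt hcpos) (sq_nonneg _))
      (fun k => hεnn (k + K))
      ((summable_nat_add_iff K).mpr hεsum)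
      (by
        intro k
        have h := hsrec (k + K) (Nat.le_add_left K k)
        have he : k + 1 + K = k + K + 1 := by omega
        simpa only [he] using h)
    obtain ⟨⟨A, hA⟩, hdd⟩ := hqf
    have hsA : Tendsto s atTop (nhds A) := (tendsto_add_atTop_iff_nat K).mp hA
    have hd20 : Tendsto d2 atTop (nhds 0) := by
      have h1 : Tendsto (fun k => c * d2 (k + K)) atTop (nhds 0) := hdd
      have h2 : Tendsto (fun k => c * d2 k) atTop (nhds 0) :=
        (tendsto_add_atTop_iff_nat K).mp h1
      have h3 := h2.const_mul (1/c)
      rw [mul_zero] at h3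
      refine h3.congr (fun k => ?_)
      field_simp
    have hdnorm0 : Tendsto (fun k => ‖z k - T (θ k) (γ k) (z k)‖) atTop (nhds 0) := by
      have := hd20.sqrt
      rw [Real.sqrt_zero] at this
      exact this.congr (fun k => Real.sqrt_sq (norm_nonneg _))
    refine ⟨?_, hdnorm0⟩
    -- qs → q
    have hq0 : Q γbar γbar q = q := by
      have ha : Q γbar γbar q ∈ {x : X | T θbar γbar x = x} :=
        (hbij γbar hγbar γbar hγbar).mapsTo hqmem
      have hs2 : Q γbar γbar (Q γbar γbar q) = Q γbar γbar q :=
        hsemi γbar hγbar γbar hγbar γbar hγbar q hq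
      exact (hbij γbar hγbar γbar hγbar).injOn ha hqmem hs2
    have hqslim : Tendsto qs atTop (nhds q) := by
      have h1 : ContinuousWithinAt (fun δ => Q δ γbar q) Γ γbar :=
        (hcont γbar hγbar q hq) γbar hγbar
      have h2 : Tendsto γ atTop (nhdsWithin γbar Γ) :=
        tendsto_nhdsWithin_iff.mpr ⟨hγlim, Eventually.of_forall hγ⟩
      have h3 := h1.tendsto.comp h2
      rw [hq0] at h3
      exact h3
    have h3 : Tendsto (fun k => ‖z k - qs k‖) atTop (nhds (Real.sqrt A)) := by
      have := hsA.sqrt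
      exact this.congr (fun k => Real.sqrt_sq (norm_nonneg _))
    have h4 : Tendsto (fun k => ‖z k - q‖ - ‖z k - qs k‖) atTop (nhds 0) := by
      apply squeeze_zero_norm (a := fun k => ‖qs k - q‖)
      · intro k
        have := abs_norm_sub_norm_le (z k - q) (z k - qs k)
        have he : (z k - q) - (z k - qs k) = qs k - q := by abel
        rw [he] at this
        exact this
      · have h5 : Tendsto (fun k => qs k - q) atTop (nhds (q - q)) :=
          hqslim.sub tendsto_const_nhds
        rw [sub_self] at h5
        simpa using h5.norm
    refine ⟨Real.sqrt A, ?_⟩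
    have := h3.add h4
    rw [add_zero] at this
    exact this.congr (fun k => by ring)
  -- instantiate at a fixed point p
  obtain ⟨p, hp⟩ := hFixne γbar hγbar
  have hpfix : T θbar γbar p = p := hp
  obtain ⟨⟨A₀, hA₀⟩, hd0⟩ := main p hpfix
  -- boundedness of z
  obtain ⟨C₀, hC₀⟩ := hA₀.bddAbove_range
  have hC₀' : ∀ k, ‖z k - p‖ ≤ C₀ := fun k => hC₀ ⟨k, rfl⟩
  set C : ℝ := C₀ + ‖p‖ with hCdef
  have hCz : ∀ k, ‖z k‖ ≤ C := by
    intro k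
    calc ‖z k‖ = ‖(z k - p) + p‖ := by rw [sub_add_cancel]
    _ ≤ ‖z k - p‖ + ‖p‖ := norm_add_le _ _
    _ ≤ C₀ + ‖p‖ := by linarith [hC₀' k]
  -- eventual upper bound on η
  set B : ℝ := 1 / (c * e0) with hBdef
  have hBpos : 0 < B := by positivity
  have hηB : ∀ᶠ k in atTop, η (θ k) (γ k) ≤ B := by
    filter_upwards [hcev, he0ev] with k h1 h2
    rw [hBdef]
    exact eta_bound hcpos he0pos (hηpos _ (hθ k) _ (hγ k)) (hlam k) h1 h2
  -- demiclosedness principle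
  have hdemi : ∀ (χ : ℕ → ℕ), Tendsto χ atTop atTop → ∀ w : X,
      (∀ y : X, Tendsto (fun j => (inner ℝ (z (χ j)) y : ℝ)) atTop (nhds (inner ℝ w y))) →
      T θbar γbar w = w := by
    intro χ hχ w hwconv
    obtain ⟨a, b, hapos, hab⟩ := hθbdd
    have hθmem : ∀ j, θ (χ j) ∈ Set.Icc a b := fun j => ⟨(hab _).1, (hab _).2⟩
    obtain ⟨θ', -, ψ, hψ, hθ'lim⟩ :=
      tendsto_subseq_of_bounded (Metric.isBounded_Icc a b) hθmem
    set χ' : ℕ → ℕ := fun j => χ (ψ j) with hχ'def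
    have hχ'T : Tendsto χ' atTop atTop := hχ.comp hψ.tendsto_atTop
    have hθ'Θ : θ' ∈ Θ :=
      hΘcl.mem_of_tendsto hθ'lim (Eventually.of_forall (fun j => hθ (χ (ψ j))))
    have hγ'lim : Tendsto (fun j => γ (χ' j)) atTop (nhds γbar) := hγlim.comp hχ'T
    have hθ''lim : Tendsto (fun j => θ (χ' j)) atTop (nhds θ') := hθ'lim
    have hTw : Tendsto (fun j => T (θ (χ' j)) (γ (χ' j)) w) atTop (nhds (T θ' γbar w)) := by
      have hcw : ContinuousWithinAt (fun pq : ℝ × ℝ => T pq.1 pq.2 w) (Θ ×ˢ Γ) (θ', γbar) :=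
        (hTcont w) _ (Set.mk_mem_prod hθ'Θ hγbar)
      have hpair : Tendsto (fun j => ((θ (χ' j), γ (χ' j)) : ℝ × ℝ)) atTop
          (nhdsWithin (θ', γbar) (Θ ×ˢ Γ)) := by
        rw [tendsto_nhdsWithin_iff]
        constructor
        · exact hθ''lim.prodMk_nhds hγ'lim
        · exact Eventually.of_forall (fun j => Set.mk_mem_prod (hθ _) (hγ _))
      exact hcw.tendsto.comp hpair
    set u : ℕ → X := fun j => z (χ' j) - T (θ (χ' j)) (γ (χ' j)) (z (χ' j)) with hudef
    set v : X := w - T θ' γbar w with hvdef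
    set vj : ℕ → X := fun j => w - T (θ (χ' j)) (γ (χ' j)) w with hvjdef
    have hu0 : Tendsto u atTop (nhds 0) := by
      rw [tendsto_zero_iff_norm_tendsto_zero]
      exact hd0.comp hχ'T
    have hvjlim : Tendsto vj atTop (nhds v) := tendsto_const_nhds.sub hTw
    have huv : Tendsto (fun j => u j - vj j) atTop (nhds (-v)) := by
      have := hu0.sub hvjlim
      rw [zero_sub] at this
      exact this
    have hkey : ∀ j, ‖u j - vj j‖ ^ 2
        ≤ η (θ (χ' j)) (γ (χ' j)) * (2 * inner ℝ (z (χ' j) - w) (u j - vj j)) := by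
      intro j
      have hH : 0 < η (θ (χ' j)) (γ (χ' j)) := hηpos _ (hθ _) _ (hγ _)
      have hcon := hconical _ (hθ (χ' j)) _ (hγ (χ' j)) (z (χ' j)) w
      exact conical_key (z (χ' j)) w _ _ _ hH hcon
    have hrhs : Tendsto (fun j => (inner ℝ (z (χ' j) - w) (u j - vj j) : ℝ)) atTop (nhds 0) := by
      have hsplit : ∀ j, (inner ℝ (z (χ' j) - w) (u j - vj j) : ℝ)
          = inner ℝ (z (χ' j) - w) ((u j - vj j) + v) - (inner ℝ (z (χ' j)) v - inner ℝ w v) := by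
        intro j
        simp only [inner_add_right, inner_sub_left]
        ring
      have h1 : Tendsto (fun j => (inner ℝ (z (χ' j) - w) ((u j - vj j) + v) : ℝ))
          atTop (nhds 0) := by
        apply squeeze_zero_norm (a := fun j => (C + ‖w‖) * ‖(u j - vj j) + v‖)
        · intro j
          rw [Real.norm_eq_abs]
          calc |(inner ℝ (z (χ' j) - w) ((u j - vj j) + v) : ℝ)|
              ≤ ‖z (χ' j) - w‖ * ‖(u j - vj j) + v‖ := abs_real_inner_le_norm _ _
          _ ≤ (C + ‖w‖) * ‖(u j - vj j) + v‖ := by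
              apply mul_le_mul_of_nonneg_right _ (norm_nonneg _)
              calc ‖z (χ' j) - w‖ ≤ ‖z (χ' j)‖ + ‖w‖ := norm_sub_le _ _
              _ ≤ C + ‖w‖ := by linarith [hCz (χ' j)]
        · have h2 : Tendsto (fun j => (u j - vj j) + v) atTop (nhds 0) := by
            have := huv.add_const v
            rw [neg_add_cancel] at this
            exact this
          have h3 := (h2.norm).const_mul (C + ‖w‖)
          rw [norm_zero, mul_zero] at h3
          exact h3
      have h4 : Tendsto (fun j => (inner ℝ (z (χ' j)) v : ℝ) - inner ℝ w v) atTop (nhds 0) := by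
        have := ((hwconv v).comp hψ.tendsto_atTop).sub_const (inner ℝ w v : ℝ)
        rw [sub_self] at this
        exact this
      have := h1.sub h4
      rw [sub_zero] at this
      exact this.congr (fun j => (hsplit j).symm)
    -- squeeze
    have hnormlim : Tendsto (fun j => ‖u j - vj j‖ ^ 2) atTop (nhds (‖v‖ ^ 2)) := by
      have := (huv.norm).pow 2
      rw [norm_neg] at this
      exact this
    have hv2 : ‖v‖ ^ 2 ≤ 0 := by
      have hBev : ∀ᶠ j in atTop, η (θ (χ' j)) (γ (χ' j)) ≤ B := hχ'T.eventually hηB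
      have hle : ∀ᶠ j in atTop, ‖u j - vj j‖ ^ 2
          ≤ B * (2 * inner ℝ (z (χ' j) - w) (u j - vj j)) := by
        filter_upwards [hBev] with j hj
        have h1 := hkey j
        have hH : 0 < η (θ (χ' j)) (γ (χ' j)) := hηpos _ (hθ _) _ (hγ _)
        have h2 : 0 ≤ 2 * (inner ℝ (z (χ' j) - w) (u j - vj j) : ℝ) := by
          nlinarith [sq_nonneg ‖u j - vj j‖]
        nlinarith
      have hlim2 : Tendsto (fun j => B * (2 * (inner ℝ (z (χ' j) - w) (u j - vj j) : ℝ)))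
          atTop (nhds 0) := by
        have := (hrhs.const_mul 2).const_mul B
        rw [mul_zero, mul_zero] at this
        exact this
      exact le_of_tendsto_of_tendsto hnormlim hlim2 hle
    have hvzero : v = 0 := by
      have h1 : ‖v‖ ^ 2 = 0 := le_antisymm hv2 (sq_nonneg _)
      have h2 : ‖v‖ = 0 := by
        have := sq_eq_zero_iff.mp h1
        exact this
      exact norm_eq_zero.mp h2
    have hwfix' : T θ' γbar w = w := by
      rw [hvdef] at hvzero
      have := sub_eq_zero.mp hvzero
      exact this.symm
    have h3 := hFixEq θ' hθ'Θ γbar hγbar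
    have : w ∈ {x : X | T θ' γbar x = x} := hwfix'
    rw [h3] at this
    exact this
  -- weak compactness & Opial
  obtain ⟨φ₀, hφ₀, w₀, hw₀⟩ := weak_compact_seq z C hCz
  have hw₀fix : T θbar γbar w₀ = w₀ :=
    hdemi φ₀ hφ₀.tendsto_atTop w₀ hw₀
  have hinnerlim : ∀ w₁ : X, T θbar γbar w₁ = w₁ → ∀ w₂ : X, T θbar γbar w₂ = w₂ →
      ∃ sl : ℝ, Tendsto (fun k => (inner ℝ (z k) (w₁ - w₂) : ℝ)) atTop (nhds sl) := by
    intro w₁ h₁ w₂ h₂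
    obtain ⟨⟨A₁, hA₁⟩, -⟩ := main w₁ h₁
    obtain ⟨⟨A₂, hA₂⟩, -⟩ := main w₂ h₂
    refine ⟨(‖w₁‖^2 - ‖w₂‖^2 - (A₁^2 - A₂^2))/2, ?_⟩
    have hTl : Tendsto (fun k =>
        (‖w₁‖^2 - ‖w₂‖^2 - (‖z k - w₁‖^2 - ‖z k - w₂‖^2))/2) atTop
        (nhds ((‖w₁‖^2 - ‖w₂‖^2 - (A₁^2 - A₂^2))/2)) := by
      exact ((tendsto_const_nhds.sub ((hA₁.pow 2).sub (hA₂.pow 2)))).div_const 2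
    refine hTl.congr (fun k => ?_)
    have e1 := norm_sub_sq_real (z k) w₁
    have e2 := norm_sub_sq_real (z k) w₂
    rw [inner_sub_right]
    linarith
  have huniq : ∀ (χ : ℕ → ℕ), Tendsto χ atTop atTop → ∀ w : X,
      (∀ y : X, Tendsto (fun j => (inner ℝ (z (χ j)) y : ℝ)) atTop (nhds (inner ℝ w y))) →
      w = w₀ := by
    intro χ hχ w hw
    have hwfix := hdemi χ hχ w hw
    obtain ⟨sl, hsl⟩ := hinnerlim w hwfix w₀ hw₀fix
    have l1 : Tendsto (fun j => (inner ℝ (z (χ j)) (w - w₀) : ℝ)) atTop (nhds sl) :=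
      hsl.comp hχ
    have e1 : (inner ℝ w (w - w₀) : ℝ) = sl := tendsto_nhds_unique (hw (w - w₀)) l1
    have l2 : Tendsto (fun j => (inner ℝ (z (φ₀ j)) (w - w₀) : ℝ)) atTop (nhds sl) :=
      hsl.comp hφ₀.tendsto_atTop
    have e2 : (inner ℝ w₀ (w - w₀) : ℝ) = sl := tendsto_nhds_unique (hw₀ (w - w₀)) l2
    have h3 : (inner ℝ (w - w₀) (w - w₀) : ℝ) = 0 := by
      rw [inner_sub_left]
      linarith
    have h4 : w - w₀ = 0 := inner_self_eq_zero.mp h3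
    exact sub_eq_zero.mp h4
  have hzweak : ∀ y : X, Tendsto (fun k => (inner ℝ (z k) y : ℝ)) atTop (nhds (inner ℝ w₀ y)) := by
    intro y
    apply tendsto_of_subseq_tendsto
    intro ns hns
    obtain ⟨ms, hms, w, hw⟩ := weak_compact_seq (fun k => z (ns k)) C (fun k => hCz (ns k))
    have hcomp : Tendsto (fun n => ns (ms n)) atTop atTop := hns.comp hms.tendsto_atTop
    have hweq : w = w₀ := huniq (fun n => ns (ms n)) hcomp w (fun y' => hw y')
    exact ⟨ms, by rw [← hweq]; exact hw y⟩
  refine ⟨w₀, hw₀fix, hzweak, ?_⟩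
  intro y
  have h1 : Tendsto (fun k => (inner ℝ (z k - T (θ k) (γ k) (z k)) y : ℝ)) atTop (nhds 0) := by
    apply squeeze_zero_norm (a := fun k => ‖z k - T (θ k) (γ k) (z k)‖ * ‖y‖)
    · intro k
      rw [Real.norm_eq_abs]
      exact abs_real_inner_le_norm _ _
    · have := hd0.mul_const ‖y‖
      rw [zero_mul] at this
      exact this
  have h2 := (hzweak y).sub h1
  rw [sub_zero] at h2
  refine h2.congr (fun k => ?_)
  rw [inner_sub_left]
  ring
end

section
/- Let (T_γ) and (Q_{δ←γ}) be as in the relocated fixed-point iteration theorem, but with the stronger summability ∑_k (L²_{γ_{k+1}←γ_k} − 1) < ∞. Then the residuals satisfy ∑_k ‖z_k − T_{θ_k,γ_k}z_k‖² < ∞; consequently min_{i≤k} ‖(Id − T_{θ_i,γ_i})z_i‖² = o(1/(k+1)) and ‖(1/(k+1)) ∑_{i=0}^k (Id − T_{θ_i,γ_i})z_i‖ = O(1/√(k+1)). -/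
open Filter

lemma conical_step {X : Type*} [NormedAddCommGroup X] [InnerProductSpace ℝ X]
    (Tk : X → X) (e l : ℝ) (he : 0 < e) (hl : 0 < l)
    (hc : ConicallyAveraged Tk e) (x zk : X) (hfix : Tk x = x) :
    ‖((1 - l) • zk + l • Tk zk) - x‖ ^ 2 ≤
      ‖zk - x‖ ^ 2 - (l * (1 - e * l) / e) * ‖zk - Tk zk‖ ^ 2 := by
  set u : X := zk - x with hu
  set v : X := Tk zk - zk with hv
  have h1 := hc zk x
  rw [hfix] at h1
  have hTzx : Tk zk - x = u + v := by rw [hu, hv]; abel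
  have hzT : zk - Tk zk = -v := by rw [hv]; abel
  have hxx : x - x = (0 : X) := sub_self x
  rw [hTzx, hzT, hxx, sub_zero, norm_neg] at h1
  have hexp : ‖u + v‖ ^ 2 = ‖u‖ ^ 2 + 2 * inner ℝ u v + ‖v‖ ^ 2 := norm_add_sq_real u v
  have hy : ((1 - l) • zk + l • Tk zk) - x = u + l • v := by
    rw [hu, hv]; module
  rw [hy, hzT, norm_neg]
  have hexp2 : ‖u + l • v‖ ^ 2 = ‖u‖ ^ 2 + 2 * (l * inner ℝ u v) + l ^ 2 * ‖v‖ ^ 2 := by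
    rw [norm_add_sq_real, real_inner_smul_right, norm_smul]
    simp [mul_pow, abs_of_pos hl]
  rw [hexp2]
  have hkey : 2 * e * inner ℝ u v ≤ -‖v‖ ^ 2 := by
    have h2 : (‖u + v‖ ^ 2 + (1 - e) / e * ‖v‖ ^ 2) * e ≤ ‖u‖ ^ 2 * e :=
      mul_le_mul_of_nonneg_right h1 he.le
    have : (1 - e) / e * ‖v‖ ^ 2 * e = (1 - e) * ‖v‖ ^ 2 := by
      field_simp
    nlinarith [hexp]
  have hscal : l * (1 - e * l) / e = l / e - l ^ 2 := by field_simp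
  rw [hscal]
  have h3 : 2 * (l * inner ℝ u v) * e ≤ -(l * ‖v‖ ^ 2) := by nlinarith
  have h4 : (l / e) * e = l := by field_simp
  nlinarith [sq_nonneg ‖v‖]

lemma aux_min (r : ℕ → ℝ) (h0 : ∀ k, 0 ≤ r k) (hs : Summable r) :
    Tendsto (fun k : ℕ => ((k : ℝ) + 1) *
      (Finset.range (k + 1)).inf' Finset.nonempty_range_add_one r) atTop (nhds 0) := by
  have htail : Tendsto (fun n : ℕ => ∑' i, r (n + i)) atTop (nhds 0) := by
    have := tendsto_sum_nat_add r
    simpa [add_comm] using this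
  have hcomp : Tendsto (fun k : ℕ => (k + 1) / 2) atTop atTop := by
    apply Filter.tendsto_atTop_atTop.2
    intro b
    exact ⟨2 * b, fun k hk => by omega⟩
  have hub : ∀ k : ℕ, ((k : ℝ) + 1) *
      (Finset.range (k + 1)).inf' Finset.nonempty_range_add_one r ≤
      2 * ∑' i, r ((k + 1) / 2 + i) := by
    intro k
    set n := (k + 1) / 2 with hn
    set m := (Finset.range (k + 1)).inf' Finset.nonempty_range_add_one r with hm
    have hm0 : 0 ≤ m := by
      obtain ⟨i, hi, hieq⟩ := Finset.exists_mem_eq_inf' Finset.nonempty_range_add_one r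
      rw [hm, hieq]; exact h0 i
    have hcard : ((k + 1 - n : ℕ) : ℝ) * m ≤ ∑ i ∈ Finset.Ico n (k + 1), r i := by
      have := Finset.card_nsmul_le_sum (Finset.Ico n (k + 1)) r m ?_
      · simpa [Nat.card_Ico, nsmul_eq_mul] using this
      · intro x hx
        apply Finset.inf'_le
        simp only [Finset.mem_Ico] at hx
        simp [hx.2]
    have hsum_le : ∑ i ∈ Finset.Ico n (k + 1), r i ≤ ∑' i, r (n + i) := by
      rw [Finset.sum_Ico_eq_sum_range]
      exact Summable.sum_le_tsum _ (fun i _ => h0 _) ((summable_nat_add_iff n).2 hs |>.congr (by simp [add_comm]))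
    have hhalf : (k + 1 : ℕ) ≤ 2 * (k + 1 - n) := by omega
    have hhalfR : ((k : ℝ) + 1) ≤ 2 * ((k + 1 - n : ℕ) : ℝ) := by
      have := (Nat.cast_le (α := ℝ)).2 hhalf
      push_cast at this ⊢
      push_cast [hn] at this
      linarith
    calc ((k : ℝ) + 1) * m ≤ 2 * ((k + 1 - n : ℕ) : ℝ) * m := by nlinarith
      _ ≤ 2 * ∑' i, r (n + i) := by nlinarith [hcard.trans hsum_le]
  have hlb : ∀ k : ℕ, 0 ≤ ((k : ℝ) + 1) *
      (Finset.range (k + 1)).inf' Finset.nonempty_range_add_one r := by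
    intro k
    have hm0 : 0 ≤ (Finset.range (k + 1)).inf' Finset.nonempty_range_add_one r := by
      obtain ⟨i, hi, hieq⟩ := Finset.exists_mem_eq_inf' Finset.nonempty_range_add_one r
      rw [hieq]; exact h0 i
    positivity
  have h2 : Tendsto (fun k : ℕ => 2 * ∑' i, r ((k + 1) / 2 + i)) atTop (nhds 0) := by
    have := (htail.comp hcomp).const_mul 2
    simpa using this
  exact tendsto_of_tendsto_of_tendsto_of_le_of_le tendsto_const_nhds h2 hlb hub

lemma aux_ergodic {X : Type*} [NormedAddCommGroup X] [NormedSpace ℝ X] (v : ℕ → X)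
    (hs : Summable (fun k => ‖v k‖ ^ 2)) :
    ∃ c : ℝ, ∀ k : ℕ,
      ‖(((k : ℝ) + 1)⁻¹) • ∑ i ∈ Finset.range (k + 1), v i‖ ≤
        c / Real.sqrt ((k : ℝ) + 1) := by
  set S := ∑' k, ‖v k‖ ^ 2 with hS
  have hS0 : 0 ≤ S := tsum_nonneg fun k => sq_nonneg _
  refine ⟨Real.sqrt S, fun k => ?_⟩
  have hk1 : (0 : ℝ) < (k : ℝ) + 1 := by positivity
  have h1 : ‖∑ i ∈ Finset.range (k + 1), v i‖ ≤ ∑ i ∈ Finset.range (k + 1), ‖v i‖ :=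
    norm_sum_le _ _
  have h2 : (∑ i ∈ Finset.range (k + 1), ‖v i‖) ^ 2 ≤
      ((k : ℝ) + 1) * ∑ i ∈ Finset.range (k + 1), ‖v i‖ ^ 2 := by
    have := sq_sum_le_card_mul_sum_sq (s := Finset.range (k + 1)) (f := fun i => ‖v i‖)
    simpa using this
  have h3 : ∑ i ∈ Finset.range (k + 1), ‖v i‖ ^ 2 ≤ S :=
    Summable.sum_le_tsum _ (fun i _ => sq_nonneg _) hs
  have h4 : (∑ i ∈ Finset.range (k + 1), ‖v i‖) ^ 2 ≤ ((k : ℝ) + 1) * S := by nlinarith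
  have h5 : ∑ i ∈ Finset.range (k + 1), ‖v i‖ ≤ Real.sqrt (((k : ℝ) + 1) * S) :=
    (Real.le_sqrt (Finset.sum_nonneg fun i _ => norm_nonneg _) (by positivity)).2 h4
  rw [norm_smul]
  have hnorm : ‖(((k : ℝ) + 1)⁻¹)‖ = ((k : ℝ) + 1)⁻¹ := by
    rw [Real.norm_eq_abs, abs_of_pos (by positivity)]
  rw [hnorm]
  have h6 : ‖∑ i ∈ Finset.range (k + 1), v i‖ ≤ Real.sqrt ((k : ℝ) + 1) * Real.sqrt S := by
    rw [← Real.sqrt_mul hk1.le]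
    exact h1.trans h5
  have hsq : Real.sqrt ((k : ℝ) + 1) ^ 2 = (k : ℝ) + 1 := Real.sq_sqrt hk1.le
  have hsp : 0 < Real.sqrt ((k : ℝ) + 1) := Real.sqrt_pos.2 hk1
  rw [div_eq_mul_inv]
  calc ((k : ℝ) + 1)⁻¹ * ‖∑ i ∈ Finset.range (k + 1), v i‖
      ≤ ((k : ℝ) + 1)⁻¹ * (Real.sqrt ((k : ℝ) + 1) * Real.sqrt S) := by
        exact mul_le_mul_of_nonneg_left h6 (by positivity)
    _ = Real.sqrt S * (Real.sqrt ((k : ℝ) + 1))⁻¹ := by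
        have hinv : (Real.sqrt ((k : ℝ) + 1))⁻¹ * Real.sqrt ((k : ℝ) + 1) = 1 :=
          inv_mul_cancel₀ hsp.ne'
        have hthis : ((k : ℝ) + 1)⁻¹ = (Real.sqrt ((k : ℝ) + 1))⁻¹ * (Real.sqrt ((k : ℝ) + 1))⁻¹ := by
          rw [← mul_inv, ← pow_two, hsq]
        calc ((k : ℝ) + 1)⁻¹ * (Real.sqrt ((k : ℝ) + 1) * Real.sqrt S)
            = ((Real.sqrt ((k : ℝ) + 1))⁻¹ * Real.sqrt ((k : ℝ) + 1)) *
              ((Real.sqrt ((k : ℝ) + 1))⁻¹ * Real.sqrt S) := by rw [hthis]; ring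
          _ = Real.sqrt S * (Real.sqrt ((k : ℝ) + 1))⁻¹ := by rw [hinv]; ring

/-- Complexity estimates for the residuals of relocated fixed-point
iterations under the stronger summability `∑ (L² − 1) < ∞`:
`∑ ‖z_k − T_{θ_k,γ_k}z_k‖² < ∞`, hence
`min_{i≤k} ‖(Id−T_{θ_i,γ_i})z_i‖² = o(1/(k+1))` and the ergodic residual is
`O(1/√(k+1))`. -/
theorem relocated_iteration_rates
    {X : Type*} [NormedAddCommGroup X] [InnerProductSpace ℝ X] [CompleteSpace X]
    (Θ Γ : Set ℝ) (hΘne : Θ.Nonempty) (hΓne : Γ.Nonempty)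
    (hΘcl : IsClosed Θ) (hΓcl : IsClosed Γ)
    (hΘpos : Θ ⊆ Set.Ioi (0 : ℝ)) (hΓpos : Γ ⊆ Set.Ioi (0 : ℝ))
    (T : ℝ → ℝ → X → X) (η : ℝ → ℝ → ℝ)
    (hηpos : ∀ θ ∈ Θ, ∀ γ ∈ Γ, 0 < η θ γ)
    (hconical : ∀ θ ∈ Θ, ∀ γ ∈ Γ, ConicallyAveraged (T θ γ) (η θ γ))
    (θbar : ℝ) (hθbar : θbar ∈ Θ)
    (hFixEq : ∀ θ ∈ Θ, ∀ γ ∈ Γ, {x : X | T θ γ x = x} = {x : X | T θbar γ x = x})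
    (hFixne : ∀ γ ∈ Γ, {x : X | T θbar γ x = x}.Nonempty)
    (Q : ℝ → ℝ → X → X) (L : ℝ → ℝ → ℝ)
    (hbij : ∀ γ ∈ Γ, ∀ δ ∈ Γ,
      Set.BijOn (Q δ γ) {x : X | T θbar γ x = x} {x : X | T θbar δ x = x})
    (hcont : ∀ γ ∈ Γ, ∀ x : X, T θbar γ x = x → ContinuousOn (fun δ => Q δ γ x) Γ)
    (hsemi : ∀ γ ∈ Γ, ∀ δ ∈ Γ, ∀ ε ∈ Γ, ∀ x : X, T θbar γ x = x →
      Q ε δ (Q δ γ x) = Q ε γ x)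
    (hLone : ∀ γ ∈ Γ, ∀ δ ∈ Γ, 1 ≤ L δ γ)
    (hLip : ∀ γ ∈ Γ, ∀ δ ∈ Γ, LipschitzWith (Real.toNNReal (L δ γ)) (Q δ γ))
    (θ : ℕ → ℝ) (hθ : ∀ k, θ k ∈ Θ)
    (γ : ℕ → ℝ) (hγ : ∀ k, γ k ∈ Γ)
    (γbar : ℝ) (hγbar : γbar ∈ Γ) (hγlim : Tendsto γ atTop (nhds γbar))
    -- stronger summability of the squared Lipschitz excess
    (hLsq : Summable (fun k => (L (γ (k + 1)) (γ k)) ^ 2 - 1))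
    (lam : ℕ → ℝ) (hlam : ∀ k, 0 < lam k)
    (hliminf : 0 < atTop.liminf (fun k =>
      lam k * (1 - η (θ k) (γ k) * lam k) / η (θ k) (γ k)))
    (z : ℕ → X)
    (hzrec : ∀ k, z (k + 1) =
      Q (γ (k + 1)) (γ k) ((1 - lam k) • z k + lam k • T (θ k) (γ k) (z k))) :
    Summable (fun k => ‖z k - T (θ k) (γ k) (z k)‖ ^ 2) ∧
    Tendsto (fun k : ℕ => ((k : ℝ) + 1) *
      (Finset.range (k + 1)).inf' (⟨0, Finset.mem_range.mpr (Nat.succ_pos k)⟩ : (Finset.range (k + 1)).Nonempty)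
        (fun i => ‖z i - T (θ i) (γ i) (z i)‖ ^ 2)) atTop (nhds 0) ∧
    ∃ c : ℝ, ∀ k : ℕ,
      ‖(((k : ℝ) + 1)⁻¹) • ∑ i ∈ Finset.range (k + 1), (z i - T (θ i) (γ i) (z i))‖ ≤
        c / Real.sqrt ((k : ℝ) + 1) := by
  classical
  obtain ⟨x0, hx0⟩ := hFixne (γ 0) (hγ 0)
  have hx0' : T θbar (γ 0) x0 = x0 := hx0
  -- the relocated fixed-point path
  set x : ℕ → X := fun k => Q (γ k) (γ 0) x0 with hxdef
  have hxfixbar : ∀ k, T θbar (γ k) (x k) = x k := fun k =>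
    (hbij (γ 0) (hγ 0) (γ k) (hγ k)).mapsTo hx0
  have hxfix : ∀ k, T (θ k) (γ k) (x k) = x k := by
    intro k
    have hset := hFixEq (θ k) (hθ k) (γ k) (hγ k)
    have hmem : x k ∈ {y : X | T θbar (γ k) y = y} := hxfixbar k
    rw [← hset] at hmem
    exact hmem
  have hxstep : ∀ k, x (k + 1) = Q (γ (k + 1)) (γ k) (x k) :=
    fun k => (hsemi (γ 0) (hγ 0) (γ k) (hγ k) (γ (k + 1)) (hγ (k + 1)) x0 hx0').symm
  -- abbreviations
  set r : ℕ → ℝ := fun k => ‖z k - T (θ k) (γ k) (z k)‖ ^ 2 with hrdef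
  set a : ℕ → ℝ := fun k => ‖z k - x k‖ ^ 2 with hadef
  set c : ℕ → ℝ := fun k =>
    lam k * (1 - η (θ k) (γ k) * lam k) / η (θ k) (γ k) with hcdef
  set Lk : ℕ → ℝ := fun k => L (γ (k + 1)) (γ k) with hLkdef
  set P : ℕ → ℝ := fun k => ∏ i ∈ Finset.range k, (Lk i) ^ 2 with hPdef
  have hr0 : ∀ k, 0 ≤ r k := fun k => sq_nonneg _
  have ha0 : ∀ k, 0 ≤ a k := fun k => sq_nonneg _
  have hL1 : ∀ k, 1 ≤ Lk k := fun k => hLone (γ k) (hγ k) (γ (k + 1)) (hγ (k + 1))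
  have hLsq' : Summable (fun k => (Lk k) ^ 2 - 1) := hLsq
  have hliminf' : (0 : ℝ) < atTop.liminf c := hliminf
  -- one-step inequality
  have hstep : ∀ k, a (k + 1) ≤ (Lk k) ^ 2 * (a k - c k * r k) := by
    intro k
    have key := conical_step (T (θ k) (γ k)) (η (θ k) (γ k)) (lam k)
      (hηpos _ (hθ k) _ (hγ k)) (hlam k)
      (hconical _ (hθ k) _ (hγ k)) (x k) (z k) (hxfix k)
    have hzx : ‖z (k + 1) - x (k + 1)‖ ≤
        Lk k * ‖((1 - lam k) • z k + lam k • T (θ k) (γ k) (z k)) - x k‖ := by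
      rw [hzrec k, hxstep k]
      have hd := (hLip (γ k) (hγ k) (γ (k + 1)) (hγ (k + 1))).dist_le_mul
        ((1 - lam k) • z k + lam k • T (θ k) (γ k) (z k)) (x k)
      rw [dist_eq_norm, dist_eq_norm] at hd
      rwa [Real.coe_toNNReal _ (by linarith [hL1 k])] at hd
    have hsq : ‖z (k + 1) - x (k + 1)‖ ^ 2 ≤
        (Lk k) ^ 2 * ‖((1 - lam k) • z k + lam k • T (θ k) (γ k) (z k)) - x k‖ ^ 2 := by
      nlinarith [norm_nonneg (z (k + 1) - x (k + 1)),
        norm_nonneg (((1 - lam k) • z k + lam k • T (θ k) (γ k) (z k)) - x k)]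
    have hLk2 : (0 : ℝ) ≤ (Lk k) ^ 2 := sq_nonneg _
    calc a (k + 1) = ‖z (k + 1) - x (k + 1)‖ ^ 2 := rfl
      _ ≤ (Lk k) ^ 2 * ‖((1 - lam k) • z k + lam k • T (θ k) (γ k) (z k)) - x k‖ ^ 2 := hsq
      _ ≤ (Lk k) ^ 2 * (a k - c k * r k) := by
          apply mul_le_mul_of_nonneg_left _ hLk2
          exact key
  -- product bounds
  have hPpos : ∀ k, 0 < P k := by
    intro k
    apply Finset.prod_pos
    intro i _
    nlinarith [hL1 i]
  set B : ℝ := Real.exp (∑' k, ((Lk k) ^ 2 - 1)) with hBdef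
  have hd0 : ∀ k, (0 : ℝ) ≤ (Lk k) ^ 2 - 1 := fun k => by nlinarith [hL1 k]
  have hB0 : 0 < B := Real.exp_pos _
  have hPB : ∀ k, P k ≤ B := by
    intro k
    calc P k ≤ ∏ i ∈ Finset.range k, Real.exp ((Lk i) ^ 2 - 1) := by
          apply Finset.prod_le_prod
          · intro i _; positivity
          · intro i _
            have := Real.add_one_le_exp ((Lk i) ^ 2 - 1)
            linarith
      _ = Real.exp (∑ i ∈ Finset.range k, ((Lk i) ^ 2 - 1)) := (Real.exp_sum _ _).symm
      _ ≤ B := Real.exp_le_exp.2 (Summable.sum_le_tsum _ (fun i _ => hd0 i) hLsq')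
  -- liminf extraction
  have hcb : ∃ cp : ℝ, 0 < cp ∧ ∀ᶠ k in atTop, cp ≤ c k := by
    rw [liminf_eq] at hliminf'
    by_contra hcon
    push_neg at hcon
    have hsup : sSup {a : ℝ | ∀ᶠ k in atTop, a ≤ c k} ≤ 0 := by
      apply Real.sSup_nonpos
      intro q hq
      by_contra h0
      push_neg at h0
      exact hcon q h0 (hq.mono fun k hk => not_lt.2 hk)
    linarith
  obtain ⟨cp, hcp, hev⟩ := hcb
  obtain ⟨N, hN⟩ := eventually_atTop.1 hev
  -- telescoping
  set b : ℕ → ℝ := fun k => a k / P k with hbdef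
  have hb0 : ∀ k, 0 ≤ b k := fun k => div_nonneg (ha0 k) (hPpos k).le
  have hbstep : ∀ k, N ≤ k → (cp / B) * r k ≤ b k - b (k + 1) := by
    intro k hk
    have hLk2 : (0 : ℝ) < (Lk k) ^ 2 := by nlinarith [hL1 k]
    have hPk := hPpos k
    have hPk1 : P (k + 1) = P k * (Lk k) ^ 2 := Finset.prod_range_succ _ _
    have e1 : b (k + 1) ≤ (a k - c k * r k) / P k := by
      have h1 : a (k + 1) / P (k + 1) ≤ ((Lk k) ^ 2 * (a k - c k * r k)) / P (k + 1) := by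
        apply div_le_div_of_nonneg_right (hstep k) (by rw [hPk1]; positivity)
      have h2 : ((Lk k) ^ 2 * (a k - c k * r k)) / P (k + 1) = (a k - c k * r k) / P k := by
        rw [hPk1, mul_comm (P k), ← div_div, mul_div_cancel_left₀ _ hLk2.ne']
      calc b (k + 1) = a (k + 1) / P (k + 1) := rfl
        _ ≤ ((Lk k) ^ 2 * (a k - c k * r k)) / P (k + 1) := h1
        _ = (a k - c k * r k) / P k := h2
    have hck : cp ≤ c k := hN k hk
    have hcr0 : 0 ≤ c k * r k := mul_nonneg (le_trans hcp.le hck) (hr0 k)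
    have e3 : (cp / B) * r k ≤ (c k * r k) / P k := by
      have : (cp * r k) / B ≤ (c k * r k) / P k :=
        div_le_div₀ hcr0 (mul_le_mul_of_nonneg_right hck (hr0 k)) (hPpos k) (hPB k)
      calc (cp / B) * r k = (cp * r k) / B := by ring
        _ ≤ (c k * r k) / P k := this
    have e4 : (a k - c k * r k) / P k = b k - (c k * r k) / P k := by
      rw [hbdef]
      simp only
      rw [sub_div]
    linarith [e1, e3, e4.symm ▸ e1]
  -- summability of the residuals
  have hps : ∀ n : ℕ, ∑ i ∈ Finset.range n, (cp / B) * r (N + i) ≤ b N := by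
    intro n
    have h1 : ∑ i ∈ Finset.range n, (cp / B) * r (N + i) ≤
        ∑ i ∈ Finset.range n, ((fun j => b (N + j)) i - (fun j => b (N + j)) (i + 1)) := by
      apply Finset.sum_le_sum
      intro i _
      have := hbstep (N + i) (Nat.le_add_right N i)
      simpa [add_assoc] using this
    have h2 : ∑ i ∈ Finset.range n, ((fun j => b (N + j)) i - (fun j => b (N + j)) (i + 1)) =
        b N - b (N + n) := by
      rw [Finset.sum_range_sub' (fun j => b (N + j)) n]
      simp
    rw [h2] at h1
    linarith [hb0 (N + n)]
  have hsum1 : Summable (fun i => (cp / B) * r (N + i)) :=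
    summable_of_sum_range_le (fun i => mul_nonneg (by positivity) (hr0 _)) hps
  have hsum2 : Summable (fun i => r (N + i)) := by
    have h := hsum1.mul_left (B / cp)
    apply h.congr
    intro i
    field_simp
  have hsumr : Summable r := by
    apply (summable_nat_add_iff (f := r) N).1
    exact hsum2.congr fun i => congrArg r (Nat.add_comm N i)
  exact ⟨hsumr, aux_min r hr0 hsumr, aux_ergodic _ hsumr⟩
end

section
/- If a sequence (a_k) of nonnegative reals satisfies ∑_k a_k² < ∞, then min_{0≤i≤k} a_i² = o(1/(k+1)), i.e., (k+1)·min_{0≤i≤k} a_i² → 0 as k → ∞. -/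
open Filter

/-- If `(a_k) ⊆ [0,∞)` satisfies `∑ a_k² < ∞`, then
`min_{0≤i≤k} a_i² = o(1/(k+1))`, i.e. `(k+1)·min_{0≤i≤k} a_i² → 0`. -/
theorem min_sq_little_o
    (a : ℕ → ℝ) (ha : ∀ k, 0 ≤ a k) (hsum : Summable (fun k => (a k) ^ 2)) :
    Tendsto (fun k : ℕ => ((k : ℝ) + 1) *
      (Finset.range (k + 1)).inf' Finset.nonempty_range_add_one (fun i => (a i) ^ 2))
      atTop (nhds 0) := by
  set b : ℕ → ℝ := fun k => (a k) ^ 2 with hbdef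
  have hb0 : ∀ k, 0 ≤ b k := fun k => sq_nonneg _
  set m : ℕ → ℝ := fun k =>
    (Finset.range (k + 1)).inf' Finset.nonempty_range_add_one b with hmdef
  have hm0 : ∀ k, 0 ≤ m k := by
    intro k
    exact Finset.le_inf' _ _ (fun i _ => hb0 i)
  -- tail bound
  have key : ∀ n : ℕ, ((n : ℝ) + 1) * m n ≤ 2 * ∑' i, b (i + n / 2) := by
    intro n
    have hcard : (Finset.Ico (n / 2) (n + 1)).card = n + 1 - n / 2 :=
      Nat.card_Ico _ _
    have hmem : ∀ i ∈ Finset.Ico (n / 2) (n + 1), m n ≤ b i := by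
      intro i hi
      exact Finset.inf'_le _ (Finset.mem_range.2 (Finset.mem_Ico.1 hi).2)
    have h1 : ((n + 1 - n / 2 : ℕ) : ℝ) * m n ≤
        ∑ i ∈ Finset.Ico (n / 2) (n + 1), b i := by
      have := Finset.card_nsmul_le_sum (Finset.Ico (n / 2) (n + 1)) b (m n) hmem
      rw [hcard] at this
      simpa [nsmul_eq_mul] using this
    have h2 : ∑ i ∈ Finset.Ico (n / 2) (n + 1), b i ≤ ∑' i, b (i + n / 2) := by
      have hshift : ∑ i ∈ Finset.Ico (n / 2) (n + 1), b i =
          ∑ i ∈ Finset.range (n + 1 - n / 2), b (i + n / 2) := by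
        rw [Finset.sum_Ico_eq_sum_range]
        exact Finset.sum_congr rfl (fun i _ => by rw [add_comm])
      rw [hshift]
      exact Summable.sum_le_tsum _ (fun i _ => hb0 _)
        ((summable_nat_add_iff (n / 2)).2 hsum)
    have hnat : (n : ℝ) + 1 ≤ 2 * ((n + 1 - n / 2 : ℕ) : ℝ) := by
      have : n + 1 ≤ 2 * (n + 1 - n / 2) := by omega
      exact_mod_cast this
    calc ((n : ℝ) + 1) * m n ≤ 2 * ((n + 1 - n / 2 : ℕ) : ℝ) * m n :=
          mul_le_mul_of_nonneg_right hnat (hm0 n)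
      _ = 2 * (((n + 1 - n / 2 : ℕ) : ℝ) * m n) := by ring
      _ ≤ 2 * ∑' i, b (i + n / 2) := by
          exact mul_le_mul_of_nonneg_left (le_trans h1 h2) (by norm_num)
  have htail : Tendsto (fun n : ℕ => 2 * ∑' i, b (i + n / 2)) atTop (nhds 0) := by
    have hhalf : Tendsto (fun n : ℕ => n / 2) atTop atTop := by
      apply tendsto_atTop_atTop.2
      intro N
      exact ⟨2 * N, fun n hn => by omega⟩
    have := (tendsto_sum_nat_add b).comp hhalf
    have h2 : Tendsto (fun n : ℕ => 2 * ∑' i, b (i + n / 2)) atTop (nhds (2 * 0)) :=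
      Tendsto.const_mul 2 this
    simpa using h2
  exact squeeze_zero (fun n => mul_nonneg (by positivity) (hm0 n)) key htail
end
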